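/- arXiv:math-ph/0206032 — 6 statements merged into one kernel-verified Lean document; each statement's English description precedes it below -/
import Mathlib

section
/- For every Schwartz function f : ℝ² → ℂ one has lim_{λ→0⁺} (1/λ²) ∫_{ℝ} ∫_{ℝ} e^{i s x / λ²} f(s, x) ds dx = 2π f(0, 0). (This is the basic rescaling limit (1/λ²) e^{i s x/λ²} → 2π δ(s) δ(x), λ → 0, used in the stochastic (low density) limit.) -/
open Complex MeasureTheory Filter

set_option maxHeartbeats 1000000

namespace RescalingAux

open FourierTransform Real SchwartzMap RealInnerProductSpace

noncomputable def G (f : SchwartzMap (ℝ × ℝ) ℂ) (ξ s : ℝ) : ℂ :=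
  ∫ x : ℝ, Complex.exp (Complex.I * ξ * x) * f (s, x)

lemma G_def (f : SchwartzMap (ℝ × ℝ) ℂ) (ξ s : ℝ) :
    G f ξ s = ∫ x : ℝ, Complex.exp (Complex.I * ξ * x) * f (s, x) := rfl

lemma norm_kernel (ξ x : ℝ) : ‖Complex.exp (Complex.I * ξ * x)‖ = 1 := by
  have h : (Complex.I * (ξ:ℂ) * (x:ℂ)) = ((ξ * x : ℝ) : ℂ) * Complex.I := by push_cast; ring
  rw [h]
  exact Complex.norm_exp_ofReal_mul_I _

lemma slice_hasDerivAt (g : SchwartzMap (ℝ × ℝ) ℂ) (s x : ℝ) :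
    HasDerivAt (fun y : ℝ => g (s, y))
      ((LineDeriv.lineDerivOpCLM ℝ (SchwartzMap (ℝ × ℝ) ℂ) ((0:ℝ), (1:ℝ)) g) (s, x)) x := by
  have h2 : HasDerivAt (fun y : ℝ => ((s : ℝ), y)) (((0:ℝ), (1:ℝ)) : ℝ × ℝ) x :=
    HasDerivAt.prodMk (hasDerivAt_const x s) (hasDerivAt_id x)
  have h1 := (g.differentiable.differentiableAt (x := (s, x))).hasFDerivAt
  rw [LineDeriv.lineDerivOpCLM_apply, SchwartzMap.lineDerivOp_apply_eq_fderiv]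
  exact h1.comp_hasDerivAt x h2

lemma slice_deriv (g : SchwartzMap (ℝ × ℝ) ℂ) (s : ℝ) :
    (deriv fun y : ℝ => g (s, y)) = fun y : ℝ =>
      (LineDeriv.lineDerivOpCLM ℝ (SchwartzMap (ℝ × ℝ) ℂ) ((0:ℝ), (1:ℝ)) g) (s, y) :=
  funext fun x => (slice_hasDerivAt g s x).deriv

lemma slice_bound (g : SchwartzMap (ℝ × ℝ) ℂ) :
    ∃ C, 0 ≤ C ∧ ∀ s x : ℝ, ‖g (s, x)‖ ≤ C * (1 + x ^ 2)⁻¹ := by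
  obtain ⟨C, hC⟩ : ∃ C, ∀ p : ℝ × ℝ, (1 + ‖p‖) ^ 2 * ‖g p‖ ≤ C :=
    ⟨_, fun p => by
      simpa using g.one_add_le_sup_seminorm_apply (𝕜 := ℝ) (m := (2, 0)) le_rfl le_rfl p⟩
  have hC0 : 0 ≤ C := le_trans (by positivity) (hC 0)
  refine ⟨C, hC0, fun s x => ?_⟩
  have hx : |x| ≤ ‖((s, x) : ℝ × ℝ)‖ := by
    simpa [Real.norm_eq_abs] using norm_snd_le ((s, x) : ℝ × ℝ)
  have h1 : (1 : ℝ) + x ^ 2 ≤ (1 + ‖((s, x) : ℝ × ℝ)‖) ^ 2 := by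
    nlinarith [_root_.sq_abs x, abs_nonneg x, norm_nonneg ((s, x) : ℝ × ℝ)]
  have h2 : (1 + x ^ 2) * ‖g (s, x)‖ ≤ C :=
    le_trans (mul_le_mul_of_nonneg_right h1 (norm_nonneg _)) (hC (s, x))
  have hpos : (0:ℝ) < 1 + x ^ 2 := by positivity
  calc ‖g (s, x)‖ = ((1 + x ^ 2) * ‖g (s, x)‖) * (1 + x ^ 2)⁻¹ := by field_simp
    _ ≤ C * (1 + x ^ 2)⁻¹ := mul_le_mul_of_nonneg_right h2 (by positivity)

lemma slice_continuous (g : SchwartzMap (ℝ × ℝ) ℂ) (s : ℝ) :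
    Continuous fun x : ℝ => g (s, x) :=
  g.continuous.comp (continuous_const.prodMk continuous_id)

lemma slice_integrable (g : SchwartzMap (ℝ × ℝ) ℂ) (s : ℝ) :
    Integrable (fun x : ℝ => g (s, x)) := by
  obtain ⟨C, hC0, hC⟩ := slice_bound g
  exact (integrable_inv_one_add_sq.const_mul C).mono'
    (slice_continuous g s).aestronglyMeasurable (Eventually.of_forall (hC s))

lemma G_eq (f : SchwartzMap (ℝ × ℝ) ℂ) (ξ s : ℝ) :
    G f ξ s = 𝓕 (fun x : ℝ => f (s, x)) (-ξ / (2 * π)) := by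
  rw [Real.fourier_eq']
  unfold G
  congr 1
  ext v
  rw [smul_eq_mul]
  congr 2
  have hv : (inner ℝ v (-ξ / (2 * π)) : ℝ) = v * (-ξ / (2 * π)) := by
    rw [RCLike.inner_apply, conj_trivial]; ring
  rw [hv]
  have h : -2 * π * (v * (-ξ / (2 * π))) = ξ * v := by
    field_simp
  rw [h]
  push_cast
  ring

lemma G_bound (f : SchwartzMap (ℝ × ℝ) ℂ) :
    ∃ C, 0 ≤ C ∧ ∀ ξ s : ℝ, ‖G f ξ s‖ ≤ C * (1 + ξ ^ 2)⁻¹ := by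
  set f₁ := LineDeriv.lineDerivOpCLM ℝ (SchwartzMap (ℝ × ℝ) ℂ) ((0:ℝ), (1:ℝ)) f with hf₁
  set f₂ := LineDeriv.lineDerivOpCLM ℝ (SchwartzMap (ℝ × ℝ) ℂ) ((0:ℝ), (1:ℝ)) f₁ with hf₂
  obtain ⟨C₀, hC₀0, hC₀⟩ := slice_bound f
  obtain ⟨C₂, hC₂0, hC₂⟩ := slice_bound f₂
  set J : ℝ := ∫ x : ℝ, (1 + x ^ 2)⁻¹ with hJ
  have hJ0 : 0 ≤ J := integral_nonneg fun x => by positivity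
  refine ⟨(C₀ + C₂) * J, by positivity, fun ξ s => ?_⟩
  set h : ℝ → ℂ := fun x => f (s, x) with hh
  have hint : Integrable h := slice_integrable f s
  have hdiff : Differentiable ℝ h := fun x => (slice_hasDerivAt f s x).differentiableAt
  have hd1 : deriv h = fun x => f₁ (s, x) := slice_deriv f s
  have hint1 : Integrable (deriv h) := hd1 ▸ slice_integrable f₁ s
  have hdiff1 : Differentiable ℝ (deriv h) :=
    hd1 ▸ fun x => (slice_hasDerivAt f₁ s x).differentiableAt
  have hd2 : deriv (deriv h) = fun x => f₂ (s, x) := by rw [hd1]; exact slice_deriv f₁ s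
  have hint2 : Integrable (deriv (deriv h)) := hd2 ▸ slice_integrable f₂ s
  have key1 : 𝓕 (deriv h) = fun w : ℝ => (2 * π * Complex.I * w) • 𝓕 h w :=
    Real.fourier_deriv hint hdiff hint1
  have key2 : 𝓕 (deriv (deriv h)) = fun w : ℝ => (2 * π * Complex.I * w) • 𝓕 (deriv h) w :=
    Real.fourier_deriv hint1 hdiff1 hint2
  -- pointwise bound on the zeroth Fourier transform
  have hnorm : ∀ (g : ℝ → ℂ) (C : ℝ), Integrable g → (∀ x, ‖g x‖ ≤ C * (1 + x ^ 2)⁻¹) →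
      ∀ w : ℝ, ‖𝓕 g w‖ ≤ C * J := by
    intro g C hg hgC w
    refine le_trans (VectorFourier.norm_fourierIntegral_le_integral_norm _ _ _ _ _) ?_
    rw [hJ, ← integral_const_mul]
    exact integral_mono hg.norm (integrable_inv_one_add_sq.const_mul C) hgC
  have n0 : ∀ w : ℝ, ‖𝓕 h w‖ ≤ C₀ * J := hnorm h C₀ hint (fun x => hC₀ s x)
  have n2 : ∀ w : ℝ, ‖𝓕 (deriv (deriv h)) w‖ ≤ C₂ * J := by
    intro w
    refine hnorm _ C₂ hint2 (fun x => ?_) w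
    rw [hd2]; exact hC₂ s x
  have n2' : ∀ w : ℝ, (2 * π * |w|) ^ 2 * ‖𝓕 h w‖ ≤ C₂ * J := by
    intro w
    have ec : ‖(2 * (π:ℂ) * Complex.I * (w:ℂ))‖ = 2 * π * |w| := by
      simp [norm_mul, Complex.norm_real, Complex.norm_I,
        _root_.abs_of_nonneg Real.pi_pos.le]
    have e1 : ‖𝓕 (deriv (deriv h)) w‖ = (2 * π * |w|) ^ 2 * ‖𝓕 h w‖ := by
      rw [key2]
      rw [norm_smul, ec]
      simp only [key1]
      rw [norm_smul, ec]
      ring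
    rw [← e1]; exact n2 w
  -- combine at w = -ξ / (2π)
  have hGe : G f ξ s = 𝓕 h (-ξ / (2 * π)) := G_eq f ξ s
  set w : ℝ := -ξ / (2 * π) with hw
  have habs : (2 * π * |w|) ^ 2 = ξ ^ 2 := by
    rw [hw, abs_div, abs_neg, _root_.abs_of_nonneg (by positivity : (0:ℝ) ≤ 2 * π)]
    have hne : (2 * π) ≠ 0 := by positivity
    have hcan : 2 * π * (|ξ| / (2 * π)) = |ξ| := by field_simp
    rw [hcan, _root_.sq_abs]
  have hcomb : (1 + ξ ^ 2) * ‖𝓕 h w‖ ≤ (C₀ + C₂) * J := by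
    have := n2' w
    rw [habs] at this
    nlinarith [n0 w]
  have hpos : (0:ℝ) < 1 + ξ ^ 2 := by positivity
  rw [hGe]
  calc ‖𝓕 h w‖ = ((1 + ξ ^ 2) * ‖𝓕 h w‖) * (1 + ξ ^ 2)⁻¹ := by field_simp
    _ ≤ ((C₀ + C₂) * J) * (1 + ξ ^ 2)⁻¹ := mul_le_mul_of_nonneg_right hcomb (by positivity)

lemma G_cont (f : SchwartzMap (ℝ × ℝ) ℂ) : Continuous fun q : ℝ × ℝ => G f q.1 q.2 := by
  obtain ⟨C₀, hC₀0, hC₀⟩ := slice_bound f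
  show Continuous fun q : ℝ × ℝ => ∫ x : ℝ, Complex.exp (Complex.I * q.1 * x) * f (q.2, x)
  apply continuous_of_dominated (bound := fun x : ℝ => C₀ * (1 + x ^ 2)⁻¹)
  · intro q
    have : Continuous fun x : ℝ => Complex.exp (Complex.I * q.1 * x) * f (q.2, x) := by
      apply Continuous.mul
      · exact Complex.continuous_exp.comp (by continuity)
      · exact slice_continuous f q.2
    exact this.aestronglyMeasurable
  · intro q
    refine Eventually.of_forall fun x => ?_
    rw [norm_mul, norm_kernel, one_mul]
    exact hC₀ q.2 x
  · exact integrable_inv_one_add_sq.const_mul C₀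
  · refine Eventually.of_forall fun x => ?_
    apply Continuous.mul
    · exact Complex.continuous_exp.comp (by continuity)
    · exact f.continuous.comp (by continuity)

attribute [irreducible] G

end RescalingAux

/-- For every Schwartz function `f : ℝ² → ℂ`,
`(1/λ²) ∫∫ e^{isx/λ²} f(s,x) ds dx → 2π f(0,0)` as `λ → 0⁺`; i.e. the rescaling limit
`(1/λ²) e^{isx/λ²} → 2π δ(s) δ(x)` of the stochastic (low density) limit. -/
theorem rescaling_limit_delta
    (f : SchwartzMap (ℝ × ℝ) ℂ) :
    Tendsto
      (fun lam : ℝ =>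
        (1 / (lam : ℂ) ^ 2) *
          ∫ p : ℝ × ℝ, Complex.exp (I * p.1 * p.2 / (lam : ℂ) ^ 2) * f p)
      (nhdsWithin 0 (Set.Ioi 0))
      (nhds ((2 * Real.pi : ℂ) * f (0, 0))) := by
  obtain ⟨C, hC0, hC⟩ := RescalingAux.G_bound f
  have hcont := RescalingAux.G_cont f
  -- Step 1: dominated convergence for the rescaled integrals
  have hlim : Tendsto (fun lam : ℝ => ∫ w : ℝ, RescalingAux.G f w (lam ^ 2 * w))
      (nhdsWithin 0 (Set.Ioi 0)) (nhds (∫ w : ℝ, RescalingAux.G f w 0)) := by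
    refine tendsto_integral_filter_of_dominated_convergence
      (F := fun (lam : ℝ) (w : ℝ) => RescalingAux.G f w (lam ^ 2 * w))
      (f := fun w : ℝ => RescalingAux.G f w 0)
      (bound := fun w : ℝ => C * (1 + w ^ 2)⁻¹) ?_ ?_ ?_ ?_
    · refine Eventually.of_forall fun lam => ?_
      have hc1 : Continuous fun w : ℝ => RescalingAux.G f w (lam ^ 2 * w) :=
        hcont.comp (continuous_id.prodMk ((continuous_const.mul continuous_id)))
      exact hc1.aestronglyMeasurable
    · exact Eventually.of_forall fun lam => Eventually.of_forall fun w => hC w _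
    · exact integrable_inv_one_add_sq.const_mul C
    · refine Eventually.of_forall fun w => ?_
      have h1 : Tendsto (fun lam : ℝ => ((w, lam ^ 2 * w) : ℝ × ℝ))
          (nhdsWithin 0 (Set.Ioi 0)) (nhds ((w, 0) : ℝ × ℝ)) := by
        apply Tendsto.mono_left ?_ nhdsWithin_le_nhds
        have hc2 : Continuous fun lam : ℝ => ((w, lam ^ 2 * w) : ℝ × ℝ) := by fun_prop
        simpa using hc2.tendsto 0
      exact (hcont.tendsto ((w, 0) : ℝ × ℝ)).comp h1
  -- Step 2: Fourier inversion identifies the limit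
  have hinv : (∫ w : ℝ, RescalingAux.G f w 0) = (2 * Real.pi : ℂ) * f (0, 0) := by
    have hint0 : Integrable (fun x : ℝ => f (0, x)) := RescalingAux.slice_integrable f 0
    have hFc : Continuous (FourierTransform.fourier fun x : ℝ => f (0, x)) :=
      VectorFourier.fourierIntegral_continuous Real.continuous_fourierChar
        (innerSL ℝ).continuous₂ hint0
    have hFeq : ∀ w : ℝ, FourierTransform.fourier (fun x : ℝ => f (0, x)) w
        = RescalingAux.G f (-(2 * Real.pi) * w) 0 := by
      intro w
      rw [RescalingAux.G_eq]
      congr 1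
      have hπ : Real.pi ≠ 0 := Real.pi_ne_zero
      field_simp
    have hFint : Integrable (FourierTransform.fourier fun x : ℝ => f (0, x)) := by
      refine (integrable_inv_one_add_sq.const_mul C).mono' hFc.aestronglyMeasurable
        (Eventually.of_forall fun w => ?_)
      rw [hFeq w]
      refine le_trans (hC _ 0) ?_
      have hsq : w ^ 2 ≤ (-(2 * Real.pi) * w) ^ 2 := by
        have h1 : (1:ℝ) ≤ 4 * Real.pi ^ 2 := by nlinarith [Real.pi_gt_three]
        have h2 : (-(2 * Real.pi) * w) ^ 2 = 4 * Real.pi ^ 2 * w ^ 2 := by ring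
        nlinarith [sq_nonneg w]
      refine mul_le_mul_of_nonneg_left ?_ hC0
      exact inv_anti₀ (by positivity) (by linarith)
    have hinv0 : (∫ w : ℝ, FourierTransform.fourier (fun x : ℝ => f (0, x)) w) = f (0, 0) := by
      have hmain := hint0.fourierInv_fourier_eq (v := (0:ℝ)) hFint
        ((RescalingAux.slice_continuous f 0).continuousAt)
      have h2 : (FourierTransform.fourierInv (FourierTransform.fourier fun x : ℝ => f (0, x))) 0
          = ∫ w : ℝ, FourierTransform.fourier (fun x : ℝ => f (0, x)) w := by
        rw [Real.fourierInv_eq]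
        simp
      rw [← h2, hmain]
    have h3 : ∀ w : ℝ, RescalingAux.G f w 0
        = FourierTransform.fourier (fun x : ℝ => f (0, x)) (-(2 * Real.pi)⁻¹ * w) := by
      intro w
      rw [RescalingAux.G_eq]
      congr 1
      ring
    calc (∫ w : ℝ, RescalingAux.G f w 0)
        = ∫ w : ℝ, FourierTransform.fourier (fun x : ℝ => f (0, x)) (-(2 * Real.pi)⁻¹ * w) := by
          simp only [h3]
      _ = |(-(2 * Real.pi)⁻¹)⁻¹| • ∫ w : ℝ, FourierTransform.fourier (fun x : ℝ => f (0, x)) w :=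
          Measure.integral_comp_mul_left _ _
      _ = (2 * Real.pi : ℝ) • (f (0, 0) : ℂ) := by
          rw [hinv0]
          congr 1
          rw [show (-(2 * Real.pi)⁻¹)⁻¹ = -(2 * Real.pi) by field_simp, abs_neg,
            _root_.abs_of_nonneg (by positivity : (0:ℝ) ≤ 2 * Real.pi)]
      _ = (2 * Real.pi : ℂ) * f (0, 0) := by
          rw [Complex.real_smul]
          push_cast
          ring
  rw [hinv] at hlim
  -- Step 3: Fubini and scaling identify the prelimit expressions
  have heq : ∀ᶠ lam in nhdsWithin (0:ℝ) (Set.Ioi 0),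
      (fun lam : ℝ => ∫ w : ℝ, RescalingAux.G f w (lam ^ 2 * w)) lam
        = (1 / (lam : ℂ) ^ 2) *
            ∫ p : ℝ × ℝ, Complex.exp (I * p.1 * p.2 / (lam : ℂ) ^ 2) * f p := by
    filter_upwards [self_mem_nhdsWithin] with lam hlam
    have hlam0 : (0:ℝ) < lam := hlam
    have hne : (lam:ℝ) ≠ 0 := ne_of_gt hlam0
    have hne2 : (lam ^ 2 : ℝ) ≠ 0 := pow_ne_zero 2 hne
    have hker : ∀ p : ℝ × ℝ, Complex.exp (I * p.1 * p.2 / (lam : ℂ) ^ 2)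
        = Complex.exp (Complex.I * ((p.1 / lam ^ 2 : ℝ) : ℂ) * (p.2 : ℂ)) := by
      intro p
      congr 1
      push_cast
      ring
    have hfint : Integrable (fun p : ℝ × ℝ =>
        Complex.exp (Complex.I * ((p.1 / lam ^ 2 : ℝ) : ℂ) * (p.2 : ℂ)) * f p) := by
      refine f.integrable.norm.mono' ?_ (Eventually.of_forall fun p => ?_)
      · refine Continuous.aestronglyMeasurable (Continuous.mul ?_ f.continuous)
        exact Complex.continuous_exp.comp (by fun_prop)
      · rw [norm_mul, RescalingAux.norm_kernel, one_mul]
    have hprod : (∫ p : ℝ × ℝ, Complex.exp (I * p.1 * p.2 / (lam : ℂ) ^ 2) * f p)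
        = ∫ s : ℝ, RescalingAux.G f (s / lam ^ 2) s := by
      rw [show (fun p : ℝ × ℝ => Complex.exp (I * p.1 * p.2 / (lam : ℂ) ^ 2) * f p)
          = fun p : ℝ × ℝ =>
            Complex.exp (Complex.I * ((p.1 / lam ^ 2 : ℝ) : ℂ) * (p.2 : ℂ)) * f p
          from funext fun p => by rw [hker p]]
      rw [Measure.volume_eq_prod]
      rw [integral_prod _ (by rwa [← Measure.volume_eq_prod])]
      simp only [RescalingAux.G_def]
    have hscale : (∫ w : ℝ, RescalingAux.G f w (lam ^ 2 * w))
        = (lam ^ 2 : ℝ)⁻¹ • ∫ s : ℝ, RescalingAux.G f (s / lam ^ 2) s := by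
      have h := Measure.integral_comp_mul_left
        (fun s : ℝ => RescalingAux.G f (s / lam ^ 2) s) (lam ^ 2)
      simp only [mul_div_cancel_left₀ _ hne2] at h
      rw [show |(lam ^ 2 : ℝ)⁻¹| = (lam ^ 2 : ℝ)⁻¹
        from _root_.abs_of_nonneg (by positivity)] at h
      exact h
    rw [hscale, hprod, Complex.real_smul]
    push_cast
    ring
  exact Tendsto.congr' heq hlim
end

section
/- For every Schwartz function f : ℝ³ → ℂ and every ω ∈ ℝ one has lim_{λ→0⁺} (1/λ²) ∭_{ℝ³} e^{i (t'−t)(E−ω)/λ²} f(t, t', E) dt dt' dE = 2π ∫_{ℝ} f(t, t, ω) dt. (This expresses the distributional limit (1/λ²) e^{i(t'−t)(E₁−E₂−ω)/λ²} → 2π δ(t'−t) δ(E₁−E₂−ω) used in the derivation of the master field commutation relations.) -/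
open Complex MeasureTheory Filter SchwartzMap
open scoped FourierTransform Real

noncomputable section

namespace RescalingAux8

instance : MeasureTheory.Measure.IsAddHaarMeasure (volume : Measure (ℝ × ℝ × ℝ)) :=
  MeasureTheory.Measure.prod.instIsAddHaarMeasure volume volume

/-- temperate growth of an affine map -/
lemma hasTemperateGrowth_affine {E F : Type*} [NormedAddCommGroup E] [NormedSpace ℝ E]
    [NormedAddCommGroup F] [NormedSpace ℝ F] (c : F) (L : E →L[ℝ] F) :
    Function.HasTemperateGrowth (fun x => c + L x) := by
  apply Function.HasTemperateGrowth.of_fderiv (k := 1) (C := ‖c‖ + ‖L‖)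
  · have h : (fderiv ℝ fun x : E => c + L x) = fun _ : E => (L : E →L[ℝ] F) := by
      ext1 x
      rw [fderiv_const_add]
      exact L.fderiv
    rw [h]
    exact Function.HasTemperateGrowth.const _
  · exact (differentiable_const c).add L.differentiable
  · intro x
    calc ‖c + L x‖ ≤ ‖c‖ + ‖L x‖ := norm_add_le _ _
      _ ≤ ‖c‖ + ‖L‖ * ‖x‖ := by gcongr; exact L.le_opNorm x
      _ ≤ (‖c‖ + ‖L‖) * (1 + ‖x‖) ^ 1 := by
          have h1 : (0:ℝ) ≤ ‖c‖ := norm_nonneg _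
          have h2 : (0:ℝ) ≤ ‖L‖ := norm_nonneg _
          have h3 : (0:ℝ) ≤ ‖x‖ := norm_nonneg _
          nlinarith

/-- the linear map `E ↦ (0,0,E)` -/
def L3 : ℝ →L[ℝ] ℝ × ℝ × ℝ :=
  (ContinuousLinearMap.inr ℝ ℝ (ℝ × ℝ)).comp (ContinuousLinearMap.inr ℝ ℝ ℝ)

lemma L3_apply (x : ℝ) : L3 x = (0, 0, x) := rfl

/-- the 1d slice of a Schwartz function, as a Schwartz function -/
def slice1 (f : SchwartzMap (ℝ × ℝ × ℝ) ℂ) (a b : ℝ) : SchwartzMap ℝ ℂ :=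
  SchwartzMap.compCLM (𝕜 := ℝ) (hasTemperateGrowth_affine ((a, b, 0) : ℝ × ℝ × ℝ) L3)
    ⟨1, 1, by
      intro x
      have : ‖x‖ ≤ ‖((a, b, 0) : ℝ × ℝ × ℝ) + L3 x‖ := by
        rw [L3_apply]
        have h : ((a, b, 0) : ℝ × ℝ × ℝ) + (0, 0, x) = (a, b, x) := by
          simp [Prod.ext_iff]
        rw [h]
        calc ‖x‖ = ‖((a,b,x) : ℝ × ℝ × ℝ).2.2‖ := rfl
          _ ≤ ‖((a,b,x) : ℝ × ℝ × ℝ).2‖ := norm_snd_le _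
          _ ≤ ‖((a,b,x) : ℝ × ℝ × ℝ)‖ := norm_snd_le _
      nlinarith [norm_nonneg (((a, b, 0) : ℝ × ℝ × ℝ) + L3 x)]⟩ f

lemma slice1_apply (f : SchwartzMap (ℝ × ℝ × ℝ) ℂ) (a b x : ℝ) :
    slice1 f a b x = f (a, b, x) := by
  have h : ((a, b, 0) : ℝ × ℝ × ℝ) + L3 x = (a, b, x) := by
    rw [L3_apply]; simp [Prod.ext_iff]
  simp only [slice1, SchwartzMap.compCLM_apply, Function.comp_apply, h]

/-- the 2d slice -/
def L2 : (ℝ × ℝ) →L[ℝ] ℝ × ℝ × ℝ := ContinuousLinearMap.inr ℝ ℝ (ℝ × ℝ)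

def slice2 (f : SchwartzMap (ℝ × ℝ × ℝ) ℂ) (t : ℝ) : SchwartzMap (ℝ × ℝ) ℂ :=
  SchwartzMap.compCLM (𝕜 := ℝ) (hasTemperateGrowth_affine ((t, 0, 0) : ℝ × ℝ × ℝ) L2)
    ⟨1, 1, by
      intro q
      have h : ((t, 0, 0) : ℝ × ℝ × ℝ) + L2 q = (t, q.1, q.2) := by
        simp [L2, Prod.ext_iff]
      rw [h]
      have : ‖q‖ ≤ ‖((t, q.1, q.2) : ℝ × ℝ × ℝ)‖ := by
        have : ‖q‖ = ‖((t, q.1, q.2) : ℝ × ℝ × ℝ).2‖ := by rfl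
        rw [this]
        exact norm_snd_le _
      nlinarith [norm_nonneg (((t, q.1, q.2)) : ℝ × ℝ × ℝ)]⟩ f

lemma slice2_apply (f : SchwartzMap (ℝ × ℝ × ℝ) ℂ) (t : ℝ) (q : ℝ × ℝ) :
    slice2 f t q = f (t, q.1, q.2) := by
  have h : ((t, 0, 0) : ℝ × ℝ × ℝ) + L2 q = (t, q.1, q.2) := by
    simp [L2, Prod.ext_iff]
  simp only [slice2, SchwartzMap.compCLM_apply, Function.comp_apply, h]


variable (f : SchwartzMap (ℝ × ℝ × ℝ) ℂ)

/-- The master seminorm constant. -/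
def S (f : SchwartzMap (ℝ × ℝ × ℝ) ℂ) : ℝ :=
  2 ^ 4 * ((Finset.Iic ((4, 2) : ℕ × ℕ)).sup (schwartzSeminormFamily ℝ (ℝ × ℝ × ℝ) ℂ)) f

lemma S_nonneg : 0 ≤ S f := by
  have h := apply_nonneg (((Finset.Iic ((4, 2) : ℕ × ℕ)).sup (schwartzSeminormFamily ℝ (ℝ × ℝ × ℝ) ℂ))) f
  unfold S
  positivity

lemma poly_key (p : ℝ × ℝ × ℝ) :
    (1 + p.1 ^ 2) * (1 + p.2.2 ^ 2) ≤ (1 + ‖p‖) ^ 4 := by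
  have h1 : |p.1| ≤ ‖p‖ := by
    calc |p.1| = ‖p.1‖ := rfl
      _ ≤ ‖p‖ := norm_fst_le _
  have h2 : |p.2.2| ≤ ‖p‖ := by
    calc |p.2.2| = ‖p.2.2‖ := rfl
      _ ≤ ‖p.2‖ := norm_snd_le _
      _ ≤ ‖p‖ := norm_snd_le _
  have h3 : (0:ℝ) ≤ ‖p‖ := norm_nonneg _
  have e1 : p.1 ^ 2 ≤ ‖p‖ ^ 2 := by nlinarith [abs_nonneg p.1, _root_.sq_abs p.1]
  have e2 : p.2.2 ^ 2 ≤ ‖p‖ ^ 2 := by nlinarith [abs_nonneg p.2.2, _root_.sq_abs p.2.2]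
  nlinarith [sq_nonneg (‖p‖ + 1), sq_nonneg ‖p‖]

lemma norm_f_le (p : ℝ × ℝ × ℝ) :
    ‖f p‖ ≤ S f / ((1 + p.1 ^ 2) * (1 + p.2.2 ^ 2)) := by
  have h := SchwartzMap.one_add_le_sup_seminorm_apply (𝕜 := ℝ) (m := ((4, 2) : ℕ × ℕ))
    (le_refl 4) (by norm_num : 0 ≤ 2) f p
  rw [norm_iteratedFDeriv_zero] at h
  have hD : (0:ℝ) < (1 + p.1 ^ 2) * (1 + p.2.2 ^ 2) := by positivity
  rw [le_div_iff₀ hD]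
  calc ‖f p‖ * ((1 + p.1 ^ 2) * (1 + p.2.2 ^ 2)) ≤ ‖f p‖ * (1 + ‖p‖) ^ 4 := by
        gcongr
        exact poly_key p
    _ = (1 + ‖p‖) ^ 4 * ‖f p‖ := by ring
    _ ≤ S f := h

lemma norm_f_le' (p : ℝ × ℝ × ℝ) : ‖f p‖ ≤ S f / (1 + p.2.2 ^ 2) := by
  refine (norm_f_le f p).trans ?_
  gcongr
  · exact S_nonneg f
  · nlinarith [sq_nonneg p.1, sq_nonneg p.2.2]

lemma norm_iteratedFDeriv_two_le (p : ℝ × ℝ × ℝ) :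
    ‖iteratedFDeriv ℝ 2 (⇑f) p‖ ≤ S f / ((1 + p.1 ^ 2) * (1 + p.2.2 ^ 2)) := by
  have h := SchwartzMap.one_add_le_sup_seminorm_apply (𝕜 := ℝ) (m := ((4, 2) : ℕ × ℕ))
    (le_refl 4) (le_refl 2) f p
  have hD : (0:ℝ) < (1 + p.1 ^ 2) * (1 + p.2.2 ^ 2) := by positivity
  rw [le_div_iff₀ hD]
  calc ‖iteratedFDeriv ℝ 2 (⇑f) p‖ * ((1 + p.1 ^ 2) * (1 + p.2.2 ^ 2))
      ≤ ‖iteratedFDeriv ℝ 2 (⇑f) p‖ * (1 + ‖p‖) ^ 4 := by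
        gcongr
        exact poly_key p
    _ = (1 + ‖p‖) ^ 4 * ‖iteratedFDeriv ℝ 2 (⇑f) p‖ := by ring
    _ ≤ S f := h

/-- first derivative of the 1d slice -/
lemma hasDerivAt_slice (a b E : ℝ) :
    HasDerivAt (fun x : ℝ => f (a, b, x)) (fderiv ℝ (⇑f) (a, b, E) (0, 0, 1)) E := by
  have hφ : HasDerivAt (fun x : ℝ => ((a, b, x) : ℝ × ℝ × ℝ)) ((0 : ℝ), (0 : ℝ), (1 : ℝ)) E :=
    (hasDerivAt_const E a).prodMk ((hasDerivAt_const E b).prodMk (hasDerivAt_id E))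
  exact (f.differentiableAt.hasFDerivAt).comp_hasDerivAt E hφ

lemma deriv_slice (a b : ℝ) :
    deriv (fun x : ℝ => f (a, b, x)) = fun E => fderiv ℝ (⇑f) (a, b, E) (0, 0, 1) := by
  ext E
  exact (hasDerivAt_slice f a b E).deriv

lemma hasDerivAt_slice2 (a b E : ℝ) :
    HasDerivAt (fun x : ℝ => fderiv ℝ (⇑f) (a, b, x) (0, 0, 1))
      (fderiv ℝ (fderiv ℝ (⇑f)) (a, b, E) (0, 0, 1) (0, 0, 1)) E := by
  have hφ : HasDerivAt (fun x : ℝ => ((a, b, x) : ℝ × ℝ × ℝ)) ((0 : ℝ), (0 : ℝ), (1 : ℝ)) E :=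
    (hasDerivAt_const E a).prodMk ((hasDerivAt_const E b).prodMk (hasDerivAt_id E))
  have hf' : ContDiff ℝ ((⊤ : ℕ∞) : WithTop ℕ∞) (fderiv ℝ (⇑f)) :=
    (f.smooth ⊤).fderiv_right (m := (⊤ : ℕ∞)) (by exact_mod_cast le_top)
  have h1 : HasDerivAt (fun x : ℝ => fderiv ℝ (⇑f) (a, b, x))
      (fderiv ℝ (fderiv ℝ (⇑f)) (a, b, E) (0, 0, 1)) E :=
    ((hf'.differentiable (by simp)).differentiableAt.hasFDerivAt).comp_hasDerivAt E hφ
  exact ((ContinuousLinearMap.apply ℝ ℂ ((0, 0, 1) : ℝ × ℝ × ℝ)).hasFDerivAt.comp_hasDerivAt E h1)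

lemma deriv2_slice (a b E : ℝ) :
    deriv (deriv (fun x : ℝ => f (a, b, x))) E
      = fderiv ℝ (fderiv ℝ (⇑f)) (a, b, E) (0, 0, 1) (0, 0, 1) := by
  rw [deriv_slice]
  exact (hasDerivAt_slice2 f a b E).deriv

lemma norm_deriv2_slice_le (a b E : ℝ) :
    ‖deriv (deriv (fun x : ℝ => f (a, b, x))) E‖
      ≤ S f / ((1 + a ^ 2) * (1 + E ^ 2)) := by
  rw [deriv2_slice]
  have h1 : fderiv ℝ (fderiv ℝ (⇑f)) (a, b, E) ((0,0,1) : ℝ × ℝ × ℝ) ((0,0,1) : ℝ × ℝ × ℝ)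
      = iteratedFDeriv ℝ 2 (⇑f) (a, b, E) ![(0,0,1), (0,0,1)] := by
    rw [iteratedFDeriv_two_apply]
    simp
  rw [h1]
  have hnorm1 : ‖((0,0,1) : ℝ × ℝ × ℝ)‖ = 1 := by
    simp [Prod.norm_def]
  calc ‖iteratedFDeriv ℝ 2 (⇑f) (a, b, E) ![(0,0,1), (0,0,1)]‖
      ≤ ‖iteratedFDeriv ℝ 2 (⇑f) (a, b, E)‖ * ∏ i, ‖(![((0,0,1) : ℝ×ℝ×ℝ), (0,0,1)]) i‖ :=
        ContinuousMultilinearMap.le_opNorm _ _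
    _ = ‖iteratedFDeriv ℝ 2 (⇑f) (a, b, E)‖ := by
        rw [Fin.prod_univ_two]
        simp [hnorm1]
    _ ≤ S f / ((1 + a ^ 2) * (1 + E ^ 2)) :=
        norm_iteratedFDeriv_two_le f ((a, b, E) : ℝ × ℝ × ℝ)

lemma slice_integral_eq (g : SchwartzMap ℝ ℂ) (ω u : ℝ) :
    ∫ E : ℝ, Complex.exp (I * u * ((E : ℂ) - ω)) * g E
      = Complex.exp (-(I * u * ω)) * 𝓕 ⇑g (-(u / (2 * π))) := by
  rw [Real.fourier_eq', ← integral_const_mul]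
  congr 1
  ext E
  simp only [smul_eq_mul, RCLike.inner_apply, conj_trivial]
  rw [← mul_assoc, ← Complex.exp_add]
  congr 1
  have h : -2 * π * (E * (-(u / (2 * π)))) = E * u := by
    field_simp
  rw [mul_comm (-(u / (2 * π))) E, h]
  push_cast
  ring

lemma norm_exp_neg_Iuω (u ω : ℝ) : ‖Complex.exp (-(I * u * ω))‖ = 1 := by
  have h : -(I * (u:ℂ) * (ω:ℂ)) = ((-(u * ω) : ℝ) : ℂ) * I := by push_cast; ring
  rw [h, Complex.norm_exp_ofReal_mul_I]

lemma norm_fourier_le (g : SchwartzMap ℝ ℂ) (ξ : ℝ) : ‖𝓕 ⇑g ξ‖ ≤ ∫ x, ‖g x‖ :=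
  VectorFourier.norm_fourierIntegral_le_integral_norm _ _ _ _ _

lemma deriv_coe (g : SchwartzMap ℝ ℂ) : deriv ⇑g = ⇑(derivCLM ℝ ℂ g) := by
  ext x
  exact (SchwartzMap.derivCLM_apply ℝ g x).symm

lemma fourier_deriv2 (g : SchwartzMap ℝ ℂ) (ξ : ℝ) :
    𝓕 (deriv (deriv ⇑g)) ξ = (2 * π * I * ξ) ^ 2 • 𝓕 ⇑g ξ := by
  have h1 : 𝓕 (deriv ⇑g) = fun ξ : ℝ => (2 * π * I * ξ) • 𝓕 ⇑g ξ :=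
    Real.fourier_deriv g.integrable g.differentiable
      (by rw [deriv_coe]; exact (derivCLM ℝ ℂ g).integrable)
  have h2 : 𝓕 (deriv ⇑(derivCLM ℝ ℂ g)) = fun ξ : ℝ => (2 * π * I * ξ) • 𝓕 ⇑(derivCLM ℝ ℂ g) ξ :=
    Real.fourier_deriv (derivCLM ℝ ℂ g).integrable (derivCLM ℝ ℂ g).differentiable
      (by rw [deriv_coe]; exact (derivCLM ℝ ℂ (derivCLM ℝ ℂ g)).integrable)
  rw [deriv_coe g, congrFun h2 ξ, ← deriv_coe g, congrFun h1 ξ]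
  simp only [smul_eq_mul]
  ring

lemma norm_fourier_le_deriv2 (g : SchwartzMap ℝ ℂ) (u : ℝ) (hu : u ≠ 0) :
    ‖𝓕 ⇑g (-(u / (2 * π)))‖ ≤ (∫ x, ‖deriv (deriv ⇑g) x‖) / u ^ 2 := by
  set ξ : ℝ := -(u / (2 * π)) with hξ
  have hfact : ‖((2 * ↑π * I * (ξ : ℂ)) ^ 2 : ℂ)‖ = u ^ 2 := by
    rw [norm_pow]
    have h : (2 * (π:ℂ) * I * (ξ:ℂ)) = ((2 * π * ξ : ℝ) : ℂ) * I := by push_cast; ring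
    rw [h, norm_mul, Complex.norm_real, Real.norm_eq_abs, Complex.norm_I,
      mul_one]
    have h2 : 2 * π * ξ = -u := by
      rw [hξ]; field_simp
    rw [h2, abs_neg, ← _root_.sq_abs u]
  have h := fourier_deriv2 g ξ
  have hnorm : ‖𝓕 (deriv (deriv ⇑g)) ξ‖ = u ^ 2 * ‖𝓕 ⇑g ξ‖ := by
    rw [h, norm_smul, hfact]
  have hb : ‖𝓕 (deriv (deriv ⇑g)) ξ‖ ≤ ∫ x, ‖deriv (deriv ⇑g) x‖ :=
    VectorFourier.norm_fourierIntegral_le_integral_norm _ _ _ _ _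
  rw [hnorm] at hb
  have hu2 : (0:ℝ) < u ^ 2 := by positivity
  rw [le_div_iff₀ hu2]
  linarith [hb]

lemma M0_bound (a b : ℝ) : ∫ x, ‖slice1 f a b x‖ ≤ π * S f / (1 + a ^ 2) := by
  have hpt : ∀ x : ℝ, ‖slice1 f a b x‖ ≤ S f / (1 + a ^ 2) * (1 + x ^ 2)⁻¹ := by
    intro x
    rw [slice1_apply]
    refine (norm_f_le f ((a, b, x) : ℝ × ℝ × ℝ)).trans (le_of_eq ?_)
    rw [division_def, mul_inv]
    ring
  have h := integral_mono (slice1 f a b).integrable.norm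
    ((integrable_inv_one_add_sq).const_mul (S f / (1 + a ^ 2))) hpt
  rw [integral_const_mul, integral_univ_inv_one_add_sq] at h
  refine h.trans (le_of_eq ?_)
  ring

lemma M2_bound (a b : ℝ) :
    ∫ x, ‖deriv (deriv ⇑(slice1 f a b)) x‖ ≤ π * S f / (1 + a ^ 2) := by
  have hgc : ⇑(slice1 f a b) = fun x : ℝ => f (a, b, x) := funext (slice1_apply f a b)
  have hint : Integrable (fun x => ‖deriv (deriv ⇑(slice1 f a b)) x‖) := by
    rw [deriv_coe, deriv_coe]
    exact (derivCLM ℝ ℂ (derivCLM ℝ ℂ (slice1 f a b))).integrable.norm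
  have hpt : ∀ x : ℝ, ‖deriv (deriv ⇑(slice1 f a b)) x‖
      ≤ S f / (1 + a ^ 2) * (1 + x ^ 2)⁻¹ := by
    intro x
    rw [hgc]
    refine (norm_deriv2_slice_le f a b x).trans (le_of_eq ?_)
    rw [division_def, mul_inv]
    ring
  have h := integral_mono hint
    ((integrable_inv_one_add_sq).const_mul (S f / (1 + a ^ 2))) hpt
  rw [integral_const_mul, integral_univ_inv_one_add_sq] at h
  refine h.trans (le_of_eq ?_)
  ring

lemma key_bound (ω : ℝ) (a b u : ℝ) :
    ‖∫ E : ℝ, Complex.exp (I * u * ((E : ℂ) - ω)) * f (a, b, E)‖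
      ≤ 2 * π * S f / ((1 + a ^ 2) * (1 + u ^ 2)) := by
  have hg : ∀ E : ℝ, f ((a : ℝ), (b : ℝ), E) = slice1 f a b E := fun E => (slice1_apply f a b E).symm
  have hrw : (∫ E : ℝ, Complex.exp (I * u * ((E : ℂ) - ω)) * f (a, b, E))
      = Complex.exp (-(I * u * ω)) * 𝓕 ⇑(slice1 f a b) (-(u / (2 * π))) := by
    simp_rw [hg]
    exact slice_integral_eq (slice1 f a b) ω u
  rw [hrw, norm_mul, norm_exp_neg_Iuω, one_mul]
  have h1a : (0:ℝ) < 1 + a ^ 2 := by positivity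
  have h1u : (0:ℝ) < 1 + u ^ 2 := by positivity
  have hS := S_nonneg f
  have hπ := Real.pi_pos
  rcases le_or_gt (u ^ 2) 1 with hu | hu
  · calc ‖𝓕 ⇑(slice1 f a b) (-(u / (2 * π)))‖ ≤ ∫ x, ‖slice1 f a b x‖ :=
        norm_fourier_le (slice1 f a b) _
      _ ≤ π * S f / (1 + a ^ 2) := M0_bound f a b
      _ ≤ 2 * π * S f / ((1 + a ^ 2) * (1 + u ^ 2)) := by
          rw [div_le_div_iff₀ h1a (by positivity)]
          nlinarith [mul_nonneg (mul_nonneg hπ.le hS) h1a.le]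
  · have hu0 : u ≠ 0 := by intro h; rw [h] at hu; norm_num at hu
    calc ‖𝓕 ⇑(slice1 f a b) (-(u / (2 * π)))‖
        ≤ (∫ x, ‖deriv (deriv ⇑(slice1 f a b)) x‖) / u ^ 2 :=
          norm_fourier_le_deriv2 (slice1 f a b) u hu0
      _ ≤ (π * S f / (1 + a ^ 2)) / u ^ 2 := by
          gcongr
          exact M2_bound f a b
      _ ≤ 2 * π * S f / ((1 + a ^ 2) * (1 + u ^ 2)) := by
          rw [div_div, div_le_div_iff₀ (by positivity) (by positivity)]
          nlinarith [mul_nonneg (mul_nonneg (mul_nonneg hπ.le hS) h1a.le)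
            (by linarith : (0:ℝ) ≤ u ^ 2 - 1)]

lemma bound_integrable (C : ℝ) :
    Integrable (fun q : ℝ × ℝ => C / ((1 + q.1 ^ 2) * (1 + q.2 ^ 2))) := by
  have h : (fun q : ℝ × ℝ => C / ((1 + q.1 ^ 2) * (1 + q.2 ^ 2)))
      = fun q : ℝ × ℝ => (C * (1 + q.1 ^ 2)⁻¹) * (1 + q.2 ^ 2)⁻¹ := by
    funext q
    rw [division_def, mul_inv]
    ring
  rw [h, Measure.volume_eq_prod]
  exact Integrable.mul_prod ((integrable_inv_one_add_sq).const_mul C) integrable_inv_one_add_sq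

lemma norm_phase (lam t t' E ω : ℝ) :
    ‖Complex.exp (I * ((t' : ℂ) - t) * ((E : ℂ) - ω) / (lam : ℂ) ^ 2)‖ = 1 := by
  have h : I * ((t' : ℂ) - t) * ((E : ℂ) - ω) / (lam : ℂ) ^ 2
      = (((t' - t) * (E - ω) / lam ^ 2 : ℝ) : ℂ) * I := by
    push_cast
    ring
  rw [h, Complex.norm_exp_ofReal_mul_I]
def Kfun (f : SchwartzMap (ℝ × ℝ × ℝ) ℂ) (ω lam : ℝ) : ℝ × ℝ → ℂ := fun q =>
  ∫ E : ℝ, Complex.exp (I * q.2 * ((E : ℂ) - ω)) * f (q.1, q.1 + lam ^ 2 * q.2, E)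

lemma norm_phase2 (u x ω : ℝ) : ‖Complex.exp (I * u * ((x : ℂ) - ω))‖ = 1 := by
  have h : I * (u : ℂ) * ((x : ℂ) - ω) = ((u * (x - ω) : ℝ) : ℂ) * I := by push_cast; ring
  rw [h, Complex.norm_exp_ofReal_mul_I]

lemma K_cont (ω lam : ℝ) : Continuous (Kfun f ω lam) := by
  apply continuous_of_dominated (bound := fun E : ℝ => S f * (1 + E ^ 2)⁻¹)
  · intro q
    apply Continuous.aestronglyMeasurable
    fun_prop
  · intro q
    filter_upwards with E
    rw [norm_mul, norm_phase2, one_mul]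
    have h := norm_f_le' f (q.1, q.1 + lam ^ 2 * q.2, E)
    rw [div_eq_mul_inv] at h
    exact h
  · exact (integrable_inv_one_add_sq).const_mul _
  · filter_upwards with E
    fun_prop

lemma K_bound (ω lam : ℝ) (q : ℝ × ℝ) :
    ‖Kfun f ω lam q‖ ≤ 2 * π * S f / ((1 + q.1 ^ 2) * (1 + q.2 ^ 2)) :=
  key_bound f ω q.1 (q.1 + lam ^ 2 * q.2) q.2

lemma K_integrable (ω lam : ℝ) : Integrable (Kfun f ω lam) :=
  (bound_integrable (2 * π * S f)).mono' (K_cont f ω lam).aestronglyMeasurable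
    (ae_of_all _ (K_bound f ω lam))

lemma K_lim (ω : ℝ) (q : ℝ × ℝ) :
    Tendsto (fun lam : ℝ => Kfun f ω lam q) (nhdsWithin 0 (Set.Ioi 0)) (nhds (Kfun f ω 0 q)) := by
  unfold Kfun
  apply tendsto_integral_filter_of_dominated_convergence (fun E : ℝ => S f * (1 + E ^ 2)⁻¹)
  · filter_upwards with lam
    apply Continuous.aestronglyMeasurable
    fun_prop
  · filter_upwards with lam
    filter_upwards with E
    rw [norm_mul, norm_phase2, one_mul]
    have h := norm_f_le' f (q.1, q.1 + lam ^ 2 * q.2, E)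
    rw [div_eq_mul_inv] at h
    exact h
  · exact (integrable_inv_one_add_sq).const_mul _
  · filter_upwards with E
    have hc : Continuous fun lam : ℝ =>
        Complex.exp (I * q.2 * ((E : ℂ) - ω)) * f (q.1, q.1 + lam ^ 2 * q.2, E) := by
      fun_prop
    exact (hc.tendsto 0).mono_left nhdsWithin_le_nhds

lemma K_tendsto (ω : ℝ) :
    Tendsto (fun lam : ℝ => ∫ q : ℝ × ℝ, Kfun f ω lam q) (nhdsWithin 0 (Set.Ioi 0))
      (nhds (∫ q : ℝ × ℝ, Kfun f ω 0 q)) := by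
  apply tendsto_integral_filter_of_dominated_convergence
    (fun q : ℝ × ℝ => 2 * π * S f / ((1 + q.1 ^ 2) * (1 + q.2 ^ 2)))
  · filter_upwards with lam
    exact (K_cont f ω lam).aestronglyMeasurable
  · filter_upwards with lam
    exact ae_of_all _ (K_bound f ω lam)
  · exact bound_integrable _
  · exact ae_of_all _ (K_lim f ω)

lemma K0_eq (ω t u : ℝ) :
    Kfun f ω 0 (t, u)
      = Complex.exp (-(I * u * ω)) * 𝓕 ⇑(slice1 f t t) (-(u / (2 * π))) := by
  have h : ∀ E : ℝ, f ((t : ℝ), t + (0:ℝ) ^ 2 * u, E) = slice1 f t t E := by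
    intro E
    rw [slice1_apply]
    norm_num
  unfold Kfun
  simp only
  simp_rw [h]
  exact slice_integral_eq (slice1 f t t) ω u

lemma integral_u (ω t : ℝ) :
    ∫ u : ℝ, Kfun f ω 0 (t, u) = ((2 * π : ℝ) : ℂ) * f (t, t, ω) := by
  set g := slice1 f t t with hg
  set Φ : ℝ → ℂ := fun ξ => Complex.exp (((2 * π * (ξ * ω) : ℝ) : ℂ) * I) * 𝓕 ⇑g ξ with hΦ
  have hF : Integrable (𝓕 ⇑g) := by
    have h' := (fourierTransformCLM ℝ g).integrable (μ := volume)
    exact h'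
  have hΦint : (∫ ξ : ℝ, Φ ξ) = f (t, t, ω) := by
    have hinv := MeasureTheory.Integrable.fourierInv_fourier_eq g.integrable hF
      (g.continuous.continuousAt (x := ω))
    have he : (∫ ξ : ℝ, Φ ξ) = 𝓕⁻ (𝓕 ⇑g) ω := by
      rw [Real.fourierInv_eq']
      apply integral_congr_ae
      filter_upwards with ξ
      simp only [hΦ, smul_eq_mul, RCLike.inner_apply, conj_trivial]
      rw [mul_comm ω ξ]
    rw [he, hinv, hg, slice1_apply]
  have h1 : ∀ u : ℝ, Kfun f ω 0 (t, u) = Φ (-(2 * π)⁻¹ * u) := by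
    intro u
    rw [K0_eq]
    have e1 : -(2 * π)⁻¹ * u = -(u / (2 * π)) := by ring
    rw [hΦ]
    simp only
    rw [e1]
    congr 1
    have e2 : 2 * π * (-(u / (2 * π)) * ω) = -(u * ω) := by
      field_simp
    rw [e2]
    congr 1
    push_cast
    ring
  calc (∫ u : ℝ, Kfun f ω 0 (t, u)) = ∫ u : ℝ, Φ (-(2 * π)⁻¹ * u) := by simp_rw [h1]
    _ = |(-(2 * π)⁻¹)⁻¹| • ∫ ξ : ℝ, Φ ξ := Measure.integral_comp_mul_left Φ (-(2 * π)⁻¹)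
    _ = ((2 * π : ℝ) : ℂ) * f (t, t, ω) := by
        rw [inv_neg, inv_inv, abs_neg, abs_of_pos (by positivity : (0:ℝ) < 2 * π), hΦint,
          Complex.real_smul]

lemma final_eq (ω : ℝ) :
    ∫ q : ℝ × ℝ, Kfun f ω 0 q = ((2 * Real.pi : ℂ)) * ∫ t : ℝ, f (t, t, ω) := by
  have hint := K_integrable f ω 0
  rw [Measure.volume_eq_prod] at hint
  rw [Measure.volume_eq_prod, integral_prod _ hint]
  have h : ∀ t : ℝ, (∫ u : ℝ, Kfun f ω 0 (t, u)) = ((2 * π : ℝ) : ℂ) * f (t, t, ω) :=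
    integral_u f ω
  simp_rw [h]
  rw [integral_const_mul]
  push_cast
  ring

lemma phase_cont (ω lam : ℝ) :
    Continuous fun p : ℝ × ℝ × ℝ =>
      Complex.exp (I * ((p.2.1 : ℂ) - p.1) * ((p.2.2 : ℂ) - ω) / (lam : ℂ) ^ 2) := by
  fun_prop

lemma step1 (ω : ℝ) (lam : ℝ) (hlam : 0 < lam) :
    (1 / (lam : ℂ) ^ 2) *
        ∫ p : ℝ × ℝ × ℝ,
          Complex.exp (I * ((p.2.1 : ℂ) - p.1) * ((p.2.2 : ℂ) - ω) / (lam : ℂ) ^ 2) * f p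
      = ∫ q : ℝ × ℝ, Kfun f ω lam q := by
  have hlam0 : lam ≠ 0 := ne_of_gt hlam
  have hl2 : (0:ℝ) < lam ^ 2 := by positivity
  have hlC : ((lam : ℂ)) ^ 2 ≠ 0 := by
    simpa using pow_ne_zero 2 (Complex.ofReal_ne_zero.mpr hlam0)
  set P : ℝ × ℝ × ℝ → ℂ := fun p =>
    Complex.exp (I * ((p.2.1 : ℂ) - p.1) * ((p.2.2 : ℂ) - ω) / (lam : ℂ) ^ 2) * f p with hP
  -- integrability of P
  have hPint : Integrable P := by
    apply Integrable.bdd_mul f.integrable (phase_cont ω lam).aestronglyMeasurable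
    exact ae_of_all _ fun p => le_of_eq (norm_phase lam p.1 p.2.1 p.2.2 ω)
  -- slice integrability
  have h2 : ∀ t : ℝ, Integrable (fun q : ℝ × ℝ => P (t, q)) := by
    intro t
    have hi : Integrable (fun q : ℝ × ℝ => f (t, q.1, q.2)) := by
      have := (slice2 f t).integrable (μ := volume)
      apply this.congr
      filter_upwards with q
      rw [slice2_apply]
    have hi2 : Integrable (fun q : ℝ × ℝ => f (t, q)) := by
      apply hi.congr
      filter_upwards with q
      rfl
    apply Integrable.bdd_mul hi2
    · apply Continuous.aestronglyMeasurable
      fun_prop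
    · exact ae_of_all _ fun q => le_of_eq (norm_phase lam t q.1 q.2 ω)
  -- iterated integrals
  have h1 : ∫ p : ℝ × ℝ × ℝ, P p = ∫ t : ℝ, ∫ q : ℝ × ℝ, P (t, q) := by
    rw [Measure.volume_eq_prod] at hPint ⊢
    exact integral_prod _ hPint
  have h3 : ∀ t : ℝ, (∫ q : ℝ × ℝ, P (t, q)) = ∫ t' : ℝ, ∫ E : ℝ, P (t, t', E) := by
    intro t
    have := h2 t
    rw [Measure.volume_eq_prod] at this ⊢
    exact integral_prod _ this
  -- substitution in t'
  have h6 : ∀ t u : ℝ, (∫ E : ℝ, P (t, t + lam ^ 2 * u, E))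
      = ∫ E : ℝ, Complex.exp (I * u * ((E : ℂ) - ω)) * f (t, t + lam ^ 2 * u, E) := by
    intro t u
    have heq : ∀ E : ℝ, I * (((t + lam ^ 2 * u : ℝ) : ℂ) - (t : ℝ)) * ((E : ℂ) - ω) / (lam : ℂ) ^ 2
        = I * (u : ℂ) * ((E : ℂ) - ω) := by
      intro E
      push_cast
      rw [div_eq_iff hlC]
      ring
    simp_rw [hP, heq]
  have h5 : ∀ t : ℝ, (1 / (lam : ℂ) ^ 2) * (∫ t' : ℝ, ∫ E : ℝ, P (t, t', E))
      = ∫ u : ℝ, Kfun f ω lam (t, u) := by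
    intro t
    set h : ℝ → ℂ := fun t' => ∫ E : ℝ, P (t, t', E) with hh
    have e4 : (∫ t' : ℝ, h t') = ∫ s : ℝ, h (t + s) :=
      (integral_add_left_eq_self h t).symm
    have e5 : (∫ u : ℝ, h (t + lam ^ 2 * u)) = |(lam ^ 2)⁻¹| • ∫ s : ℝ, h (t + s) :=
      Measure.integral_comp_mul_left (fun s => h (t + s)) (lam ^ 2)
    have e5' : (∫ s : ℝ, h (t + s)) = (lam ^ 2 : ℝ) • ∫ u : ℝ, h (t + lam ^ 2 * u) := by
      rw [e5, abs_of_pos (by positivity), smul_smul]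
      rw [mul_inv_cancel₀ (ne_of_gt hl2), one_smul]
    have e6 : ∀ u : ℝ, h (t + lam ^ 2 * u) = Kfun f ω lam (t, u) := by
      intro u
      rw [show Kfun f ω lam (t, u)
          = ∫ E : ℝ, Complex.exp (I * u * ((E : ℂ) - ω)) * f (t, t + lam ^ 2 * u, E) from rfl]
      exact h6 t u
    rw [e4, e5']
    simp_rw [e6]
    rw [Complex.real_smul]
    push_cast
    rw [← mul_assoc]
    rw [one_div, inv_mul_cancel₀ hlC, one_mul]
  -- assemble
  calc (1 / (lam : ℂ) ^ 2) * ∫ p : ℝ × ℝ × ℝ, P p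
      = (1 / (lam : ℂ) ^ 2) * ∫ t : ℝ, ∫ t' : ℝ, ∫ E : ℝ, P (t, t', E) := by
        rw [h1]
        congr 1
        exact integral_congr_ae (Filter.Eventually.of_forall h3)
    _ = ∫ t : ℝ, (1 / (lam : ℂ) ^ 2) * ∫ t' : ℝ, ∫ E : ℝ, P (t, t', E) :=
        (integral_const_mul _ _).symm
    _ = ∫ t : ℝ, ∫ u : ℝ, Kfun f ω lam (t, u) :=
        integral_congr_ae (Filter.Eventually.of_forall h5)
    _ = ∫ q : ℝ × ℝ, Kfun f ω lam q := by
        have := K_integrable f ω lam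
        rw [Measure.volume_eq_prod] at this ⊢
        exact (integral_prod _ this).symm
end RescalingAux8

end

open RescalingAux8 in
/-- For every Schwartz function `f : ℝ³ → ℂ` and every `ω ∈ ℝ`,
`(1/λ²) ∭ e^{i(t'−t)(E−ω)/λ²} f(t,t',E) dt dt' dE → 2π ∫ f(t,t,ω) dt` as `λ → 0⁺`;
i.e. `(1/λ²) e^{i(t'−t)(E₁−E₂−ω)/λ²} → 2π δ(t'−t) δ(E₁−E₂−ω)`. -/
theorem rescaling_limit_delta_time_energy
    (f : SchwartzMap (ℝ × ℝ × ℝ) ℂ) (ω : ℝ) :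
    Tendsto
      (fun lam : ℝ =>
        (1 / (lam : ℂ) ^ 2) *
          ∫ p : ℝ × ℝ × ℝ,
            Complex.exp (I * ((p.2.1 : ℂ) - p.1) * ((p.2.2 : ℂ) - ω) / (lam : ℂ) ^ 2) * f p)
      (nhdsWithin 0 (Set.Ioi 0))
      (nhds ((2 * Real.pi : ℂ) * ∫ t : ℝ, f (t, t, ω))) := by
  rw [← final_eq f ω]
  apply (K_tendsto f ω).congr'
  filter_upwards [self_mem_nhdsWithin] with lam hlam
  exact (step1 f ω lam hlam).symm
end

section
/- For every Schwartz function f : ℝ³ → ℂ, every ω ∈ ℝ, and every real c ≠ 0 one has lim_{λ→0⁺} (1/λ²) ∭_{ℝ³} e^{i (t'−t)(E−ω)/λ²} e^{i t' c / λ²} f(t, t', E) dt dt' dE = 0. (This expresses the vanishing, for distinct Bohr frequencies ω ≠ ω' with c = ω − ω', of the limit of (1/λ²) e^{i(t'−t)(E−ω)/λ²} e^{it'(ω−ω')/λ²}, producing the Kronecker delta δ_{ω,ω'} in the master field commutation relations.) -/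
open Complex MeasureTheory Filter Real FourierTransform SchwartzMap

instance : (volume : Measure (ℝ × ℝ)).IsAddHaarMeasure :=
  (MeasureTheory.Measure.volume_eq_prod ℝ ℝ).symm ▸
    (inferInstance : ((volume : Measure ℝ).prod (volume : Measure ℝ)).IsAddHaarMeasure)

instance : (volume : Measure (ℝ × ℝ × ℝ)).IsAddHaarMeasure :=
  (MeasureTheory.Measure.volume_eq_prod ℝ (ℝ × ℝ)).symm ▸
    (inferInstance :
      ((volume : Measure ℝ).prod (volume : Measure (ℝ × ℝ))).IsAddHaarMeasure)

example : (volume : Measure (ℝ × ℝ × ℝ)).HasTemperateGrowth := inferInstance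


lemma norm_exp_I_re_zero (z : ℂ) (hz : z.re = 0) : ‖Complex.exp z‖ = 1 := by
  rw [Complex.norm_exp, hz,
    Real.exp_zero]

lemma fourier_as_exp (g : ℝ → ℂ) (K : ℝ) :
    𝓕 g (-K / (2 * π)) = ∫ x : ℝ, Complex.exp (I * K * x) * g x := by
  rw [Real.fourier_real_eq_integral_exp_smul]
  congr 1
  funext v
  rw [smul_eq_mul]
  congr 1
  have hπ : (π : ℝ) ≠ 0 := Real.pi_ne_zero
  have : (-2) * π * v * (-K / (2 * π)) = v * K := by field_simp
  rw [this]
  push_cast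
  ring

lemma key1d {g g1 g2 : ℝ → ℂ}
    (h1 : ∀ x, HasDerivAt g (g1 x) x) (h2 : ∀ x, HasDerivAt g1 (g2 x) x)
    (hi : Integrable g) (hi1 : Integrable g1) (hi2 : Integrable g2)
    {K : ℝ} (hK : K ≠ 0) :
    ∫ x : ℝ, Complex.exp (I * K * x) * g x
      = (-1 / (K : ℂ) ^ 2) * ∫ x : ℝ, Complex.exp (I * K * x) * g2 x := by
  have hd : deriv g = g1 := funext fun x => (h1 x).deriv
  have hd1 : deriv g1 = g2 := funext fun x => (h2 x).deriv
  have hdiff : Differentiable ℝ g := fun x => (h1 x).differentiableAt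
  have hdiff1 : Differentiable ℝ g1 := fun x => (h2 x).differentiableAt
  have F1 := Real.fourier_deriv hi hdiff (hd ▸ hi1)
  have F2 := Real.fourier_deriv hi1 hdiff1 (hd1 ▸ hi2)
  rw [hd] at F1
  rw [hd1] at F2
  set w : ℝ := -K / (2 * π) with hw
  have hπ : (π : ℂ) ≠ 0 := by
    exact_mod_cast Complex.ofReal_ne_zero.2 Real.pi_ne_zero
  have hcoef : (2 * (π : ℂ) * I * (w : ℂ)) = -(I * K) := by
    rw [hw]; push_cast; field_simp
  have hKc : (K : ℂ) ≠ 0 := Complex.ofReal_ne_zero.2 hK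
  have key : 𝓕 g2 w = (-(K : ℂ) ^ 2) * 𝓕 g w := by
    have e2 := congrFun F2 w
    have e1 := congrFun F1 w
    rw [e2, smul_eq_mul, e1, smul_eq_mul, hcoef]
    ring_nf
    rw [Complex.I_sq]
    ring
  rw [← fourier_as_exp, ← fourier_as_exp]
  show 𝓕 g w = _
  rw [key]
  field_simp

lemma norm_exp_I_mul (a b : ℝ) : ‖Complex.exp (I * (a:ℂ) * (b:ℂ))‖ = 1 := by
  rw [Complex.norm_exp]
  simp

lemma hasDerivAt_slice2 (h : SchwartzMap (ℝ × ℝ × ℝ) ℂ) (t E s : ℝ) :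
    HasDerivAt (fun s : ℝ => h (t, s, E))
      ((LineDeriv.lineDerivOp (((0:ℝ), (1:ℝ), (0:ℝ)) : ℝ × ℝ × ℝ) h) (t, s, E)) s := by
  have hl : HasDerivAt (fun s : ℝ => ((t, s, E) : ℝ × ℝ × ℝ))
      (((0:ℝ), (1:ℝ), (0:ℝ)) : ℝ × ℝ × ℝ) s :=
    (hasDerivAt_const s t).prodMk ((hasDerivAt_id s).prodMk (hasDerivAt_const s E))
  have hf := (h.differentiableAt (x := ((t, s, E) : ℝ × ℝ × ℝ))).hasFDerivAt
  have := hf.comp_hasDerivAt s hl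
  exact this

lemma hasDerivAt_slice1 (h : SchwartzMap (ℝ × ℝ × ℝ) ℂ) (t' E s : ℝ) :
    HasDerivAt (fun s : ℝ => h (s, t', E))
      ((LineDeriv.lineDerivOp (((1:ℝ), (0:ℝ), (0:ℝ)) : ℝ × ℝ × ℝ) h) (s, t', E)) s := by
  have hl : HasDerivAt (fun s : ℝ => ((s, t', E) : ℝ × ℝ × ℝ))
      (((1:ℝ), (0:ℝ), (0:ℝ)) : ℝ × ℝ × ℝ) s :=
    (hasDerivAt_id s).prodMk ((hasDerivAt_const s t').prodMk (hasDerivAt_const s E))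
  have hf := (h.differentiableAt (x := ((s, t', E) : ℝ × ℝ × ℝ))).hasFDerivAt
  have := hf.comp_hasDerivAt s hl
  exact this

lemma schwartz_decay_coord (h : SchwartzMap (ℝ × ℝ × ℝ) ℂ) (κ : ℝ × ℝ × ℝ → ℝ)
    (hκ : ∀ p, |κ p| ≤ ‖p‖) :
    ∃ C : ℝ, ∀ p, ‖h p‖ ≤ C * (1 + κ p ^ 2)⁻¹ := by
  obtain ⟨C₀, -, hC₀⟩ := h.decay 0 0
  obtain ⟨C₂, -, hC₂⟩ := h.decay 2 0
  refine ⟨C₀ + C₂, fun p => ?_⟩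
  have h₀ := hC₀ p
  have h₂ := hC₂ p
  rw [norm_iteratedFDeriv_zero] at h₀ h₂
  rw [pow_zero, one_mul] at h₀
  have hk2 : κ p ^ 2 ≤ ‖p‖ ^ 2 := by
    rw [← _root_.sq_abs]
    exact pow_le_pow_left₀ (abs_nonneg _) (hκ p) 2
  have hpos : (0:ℝ) < 1 + κ p ^ 2 := by positivity
  have key : ‖h p‖ * (1 + κ p ^ 2) ≤ C₀ + C₂ := by
    nlinarith [norm_nonneg (h p), mul_le_mul_of_nonneg_right hk2 (norm_nonneg (h p))]
  calc ‖h p‖ = ‖h p‖ * (1 + κ p ^ 2) * (1 + κ p ^ 2)⁻¹ := by field_simp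
    _ ≤ (C₀ + C₂) * (1 + κ p ^ 2)⁻¹ := by gcongr
      
lemma abs_coord21 (p : ℝ × ℝ × ℝ) : |p.2.1| ≤ ‖p‖ :=
  le_trans (le_trans (Real.norm_eq_abs _ ▸ le_refl _) (norm_fst_le p.2)) (norm_snd_le p)

lemma abs_coord22 (p : ℝ × ℝ × ℝ) : |p.2.2| ≤ ‖p‖ :=
  le_trans (le_trans (Real.norm_eq_abs _ ▸ le_refl _) (norm_snd_le p.2)) (norm_snd_le p)

lemma abs_coord1 (p : ℝ × ℝ × ℝ) : |p.1| ≤ ‖p‖ :=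
  le_trans (Real.norm_eq_abs _ ▸ le_refl _) (norm_fst_le p)

lemma schwartz_decay_prod (h : SchwartzMap (ℝ × ℝ × ℝ) ℂ) :
    ∃ C : ℝ, ∀ p, ‖h p‖ ≤ C * ((1 + p.2.1 ^ 2)⁻¹ * (1 + p.2.2 ^ 2)⁻¹) := by
  obtain ⟨C₀, -, hC₀⟩ := h.decay 0 0
  obtain ⟨C₂, -, hC₂⟩ := h.decay 2 0
  obtain ⟨C₄, -, hC₄⟩ := h.decay 4 0
  refine ⟨C₀ + 2 * C₂ + C₄, fun p => ?_⟩
  have h₀ := hC₀ p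
  have h₂ := hC₂ p
  have h₄ := hC₄ p
  rw [norm_iteratedFDeriv_zero] at h₀ h₂ h₄
  rw [pow_zero, one_mul] at h₀
  have ha : p.2.1 ^ 2 ≤ ‖p‖ ^ 2 := by
    rw [← _root_.sq_abs]; exact pow_le_pow_left₀ (abs_nonneg _) (abs_coord21 p) 2
  have hb : p.2.2 ^ 2 ≤ ‖p‖ ^ 2 := by
    rw [← _root_.sq_abs]; exact pow_le_pow_left₀ (abs_nonneg _) (abs_coord22 p) 2
  have hab : p.2.1 ^ 2 * p.2.2 ^ 2 ≤ ‖p‖ ^ 4 := by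
    calc p.2.1 ^ 2 * p.2.2 ^ 2 ≤ ‖p‖ ^ 2 * ‖p‖ ^ 2 :=
          mul_le_mul ha hb (sq_nonneg _) (sq_nonneg _)
      _ = ‖p‖ ^ 4 := by ring
  have hpos : (0:ℝ) < (1 + p.2.1 ^ 2) * (1 + p.2.2 ^ 2) := by positivity
  have key : ‖h p‖ * ((1 + p.2.1 ^ 2) * (1 + p.2.2 ^ 2)) ≤ C₀ + 2 * C₂ + C₄ := by
    nlinarith [norm_nonneg (h p),
      mul_le_mul_of_nonneg_right ha (norm_nonneg (h p)),
      mul_le_mul_of_nonneg_right hb (norm_nonneg (h p)),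
      mul_le_mul_of_nonneg_right hab (norm_nonneg (h p))]
  calc ‖h p‖ = ‖h p‖ * ((1 + p.2.1 ^ 2) * (1 + p.2.2 ^ 2))
        * ((1 + p.2.1 ^ 2) * (1 + p.2.2 ^ 2))⁻¹ := by field_simp
    _ ≤ (C₀ + 2 * C₂ + C₄) * ((1 + p.2.1 ^ 2) * (1 + p.2.2 ^ 2))⁻¹ := by gcongr
    _ = (C₀ + 2 * C₂ + C₄) * ((1 + p.2.1 ^ 2)⁻¹ * (1 + p.2.2 ^ 2)⁻¹) := by
        rw [mul_inv]

lemma slice_integrable_t' (h : SchwartzMap (ℝ × ℝ × ℝ) ℂ) (t E : ℝ) :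
    Integrable (fun s : ℝ => h (t, s, E)) := by
  obtain ⟨C, hC⟩ := schwartz_decay_coord h (fun p => p.2.1) abs_coord21
  refine Integrable.mono' (integrable_inv_one_add_sq.const_mul C)
    ((h.continuous.comp (by fun_prop : Continuous fun s : ℝ =>
      ((t, s, E) : ℝ × ℝ × ℝ))).aestronglyMeasurable) (ae_of_all _ fun s => hC (t, s, E))

lemma slice_integrable_t (h : SchwartzMap (ℝ × ℝ × ℝ) ℂ) (t' E : ℝ) :
    Integrable (fun s : ℝ => h (s, t', E)) := by
  obtain ⟨C, hC⟩ := schwartz_decay_coord h (fun p => p.1) abs_coord1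
  refine Integrable.mono' (integrable_inv_one_add_sq.const_mul C)
    ((h.continuous.comp (by fun_prop : Continuous fun s : ℝ =>
      ((s, t', E) : ℝ × ℝ × ℝ))).aestronglyMeasurable) (ae_of_all _ fun s => hC (s, t', E))

lemma schwartz_dominated_integrable {h : SchwartzMap (ℝ × ℝ × ℝ) ℂ} {A : ℝ}
    {G : ℝ × ℝ × ℝ → ℂ} (hGm : AEStronglyMeasurable G volume)
    (hG : ∀ p, ‖G p‖ ≤ A * ‖h p‖) : Integrable G volume :=
  (h.integrable.norm.const_mul A).mono' hGm (ae_of_all _ hG)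

lemma slice2_integrable_bound (h : SchwartzMap (ℝ × ℝ × ℝ) ℂ) (t A : ℝ) (hA : 0 ≤ A)
    (G : ℝ × ℝ → ℂ) (hGm : AEStronglyMeasurable G (volume.prod volume))
    (hG : ∀ q, ‖G q‖ ≤ A * ‖h (t, q)‖) :
    Integrable G (volume.prod volume) := by
  obtain ⟨C, hC⟩ := schwartz_decay_prod h
  have hint : Integrable (fun q : ℝ × ℝ => (A * C) * ((1 + q.1 ^ 2)⁻¹ * (1 + q.2 ^ 2)⁻¹))
      (volume.prod volume) :=
    (integrable_inv_one_add_sq.mul_prod integrable_inv_one_add_sq).const_mul (A * C)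
  refine hint.mono' hGm (ae_of_all _ fun q => ?_)
  calc ‖G q‖ ≤ A * ‖h (t, q)‖ := hG q
    _ ≤ A * (C * ((1 + q.1 ^ 2)⁻¹ * (1 + q.2 ^ 2)⁻¹)) := by
        have := hC (t, q)
        exact mul_le_mul_of_nonneg_left this hA
    _ = (A * C) * ((1 + q.1 ^ 2)⁻¹ * (1 + q.2 ^ 2)⁻¹) := by ring

lemma coef_norm (r : ℝ) : ‖(-1 / ((r:ℂ)) ^ 2 : ℂ)‖ = 1 / r ^ 2 := by
  rw [norm_div, norm_neg, norm_one, norm_pow, Complex.norm_real, Real.norm_eq_abs, _root_.sq_abs]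

lemma coef_bound {m c x : ℝ} (hm : 0 < m) (hc : c ≠ 0) (hx : |c| / 2 ≤ |x|) :
    ‖(-1 / (((m * x : ℝ) : ℂ)) ^ 2 : ℂ)‖ ≤ 4 / (m ^ 2 * c ^ 2) := by
  rw [coef_norm]
  have hx2 : c ^ 2 / 4 ≤ x ^ 2 := by
    have := pow_le_pow_left₀ (by positivity) hx 2
    rw [_root_.sq_abs, div_pow, _root_.sq_abs] at this
    linarith
  have hpos : 0 < m ^ 2 * (c ^ 2 / 4) := by
    have : c ^ 2 > 0 := by positivity
    positivity
  have hle : m ^ 2 * (c ^ 2 / 4) ≤ (m * x) ^ 2 := by nlinarith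
  calc 1 / (m * x) ^ 2 ≤ 1 / (m ^ 2 * (c ^ 2 / 4)) := one_div_le_one_div_of_le hpos hle
    _ = 4 / (m ^ 2 * c ^ 2) := by
        field_simp

noncomputable def D2 (h : SchwartzMap (ℝ × ℝ × ℝ) ℂ) : SchwartzMap (ℝ × ℝ × ℝ) ℂ :=
  LineDeriv.lineDerivOp (((0:ℝ), (1:ℝ), (0:ℝ)) : ℝ × ℝ × ℝ) h

noncomputable def D1 (h : SchwartzMap (ℝ × ℝ × ℝ) ℂ) : SchwartzMap (ℝ × ℝ × ℝ) ℂ :=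
  LineDeriv.lineDerivOp (((1:ℝ), (0:ℝ), (0:ℝ)) : ℝ × ℝ × ℝ) h

lemma hasDerivAt_sliceD2 (h : SchwartzMap (ℝ × ℝ × ℝ) ℂ) (t E s : ℝ) :
    HasDerivAt (fun s : ℝ => h (t, s, E)) (D2 h (t, s, E)) s :=
  hasDerivAt_slice2 h t E s

lemma hasDerivAt_sliceD1 (h : SchwartzMap (ℝ × ℝ × ℝ) ℂ) (t' E s : ℝ) :
    HasDerivAt (fun s : ℝ => h (s, t', E)) (D1 h (s, t', E)) s :=
  hasDerivAt_slice1 h t' E s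

lemma master_bound (f : SchwartzMap (ℝ × ℝ × ℝ) ℂ) (ω c m : ℝ) (hc : c ≠ 0) (hm : 0 < m) :
    ‖∫ p : ℝ × ℝ × ℝ,
        Complex.exp (I * ((p.2.1 : ℂ) - p.1) * ((p.2.2 : ℂ) - ω) * (m : ℂ)) *
          Complex.exp (I * (p.2.1 : ℂ) * c * (m : ℂ)) * f p‖
      ≤ 4 / (m ^ 2 * c ^ 2) *
        ((∫ p : ℝ × ℝ × ℝ, ‖D2 (D2 f) p‖) + (∫ p : ℝ × ℝ × ℝ, ‖D1 (D1 f) p‖)) := by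
  set Φ : ℝ × ℝ × ℝ → ℂ := fun p =>
    Complex.exp (I * ((p.2.1 : ℂ) - p.1) * ((p.2.2 : ℂ) - ω) * (m : ℂ)) *
      Complex.exp (I * (p.2.1 : ℂ) * c * (m : ℂ)) * f p with hΦdef
  set S : Set (ℝ × ℝ × ℝ) := {p | |c| / 2 ≤ |p.2.2 - ω + c|} with hSdef
  set ΨA : ℝ × ℝ × ℝ → ℂ := S.indicator (fun p =>
    (-1 / (((m * (p.2.2 - ω + c) : ℝ)) : ℂ) ^ 2) *
      (Complex.exp (I * (((m * (ω - p.2.2) : ℝ)) : ℂ) * (p.1 : ℂ)) *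
        (Complex.exp (I * (((m * (p.2.2 - ω + c) : ℝ)) : ℂ) * (p.2.1 : ℂ)) * D2 (D2 f) p)))
    with hΨAdef
  set ΨB : ℝ × ℝ × ℝ → ℂ := Sᶜ.indicator (fun p =>
    (-1 / (((m * (ω - p.2.2) : ℝ)) : ℂ) ^ 2) *
      (Complex.exp (I * (((m * (p.2.2 - ω + c) : ℝ)) : ℂ) * (p.2.1 : ℂ)) *
        (Complex.exp (I * (((m * (ω - p.2.2) : ℝ)) : ℂ) * (p.1 : ℂ)) * D1 (D1 f) p)))
    with hΨBdef
  have hphase : ∀ t t' E : ℝ,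
      Complex.exp (I * ((t' : ℂ) - (t : ℂ)) * ((E : ℂ) - (ω : ℂ)) * (m : ℂ)) *
        Complex.exp (I * (t' : ℂ) * (c : ℂ) * (m : ℂ))
      = Complex.exp (I * (((m * (ω - E) : ℝ)) : ℂ) * (t : ℂ)) *
          Complex.exp (I * (((m * (E - ω + c) : ℝ)) : ℂ) * (t' : ℂ)) := by
    intro t t' E
    rw [← Complex.exp_add, ← Complex.exp_add]
    congr 1
    push_cast
    ring
  have hΦcont : Continuous Φ := by
    rw [hΦdef]
    exact ((Complex.continuous_exp.comp (by fun_prop)).mul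
      (Complex.continuous_exp.comp (by fun_prop))).mul f.continuous
  have hΦnorm : ∀ p, ‖Φ p‖ ≤ 1 * ‖f p‖ := by
    intro p
    rw [hΦdef]
    dsimp only
    rw [hphase p.1 p.2.1 p.2.2, norm_mul, norm_mul, norm_exp_I_mul, norm_exp_I_mul]
    simp
  have hΦint : Integrable Φ :=
    schwartz_dominated_integrable (h := f) hΦcont.aestronglyMeasurable hΦnorm
  have hS : MeasurableSet S := by
    rw [hSdef]
    exact measurableSet_le measurable_const
      ((by fun_prop : Continuous fun p : ℝ × ℝ × ℝ => |p.2.2 - ω + c|).measurable)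
  have hinnerA_meas : Measurable (fun p : ℝ × ℝ × ℝ =>
      (-1 / (((m * (p.2.2 - ω + c) : ℝ)) : ℂ) ^ 2) *
        (Complex.exp (I * (((m * (ω - p.2.2) : ℝ)) : ℂ) * (p.1 : ℂ)) *
          (Complex.exp (I * (((m * (p.2.2 - ω + c) : ℝ)) : ℂ) * (p.2.1 : ℂ)) * D2 (D2 f) p))) := by
    apply Measurable.mul
    · exact measurable_const.div ((Complex.measurable_ofReal.comp
        (by fun_prop : Measurable fun p : ℝ × ℝ × ℝ => m * (p.2.2 - ω + c))).pow_const 2)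
    · exact ((Complex.continuous_exp.comp (by fun_prop)).mul
        ((Complex.continuous_exp.comp (by fun_prop)).mul (D2 (D2 f)).continuous)).measurable
  have hinnerB_meas : Measurable (fun p : ℝ × ℝ × ℝ =>
      (-1 / (((m * (ω - p.2.2) : ℝ)) : ℂ) ^ 2) *
        (Complex.exp (I * (((m * (p.2.2 - ω + c) : ℝ)) : ℂ) * (p.2.1 : ℂ)) *
          (Complex.exp (I * (((m * (ω - p.2.2) : ℝ)) : ℂ) * (p.1 : ℂ)) * D1 (D1 f) p))) := by
    apply Measurable.mul
    · exact measurable_const.div ((Complex.measurable_ofReal.comp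
        (by fun_prop : Measurable fun p : ℝ × ℝ × ℝ => m * (ω - p.2.2))).pow_const 2)
    · exact ((Complex.continuous_exp.comp (by fun_prop)).mul
        ((Complex.continuous_exp.comp (by fun_prop)).mul (D1 (D1 f)).continuous)).measurable
  have hΨA_meas : Measurable ΨA := by
    rw [hΨAdef]
    exact hinnerA_meas.indicator hS
  have hΨB_meas : Measurable ΨB := by
    rw [hΨBdef]
    exact hinnerB_meas.indicator hS.compl
  have hΨAnorm : ∀ p, ‖ΨA p‖ ≤ 4 / (m ^ 2 * c ^ 2) * ‖D2 (D2 f) p‖ := by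
    intro p
    rw [hΨAdef]
    by_cases hp : p ∈ S
    · rw [Set.indicator_of_mem hp, norm_mul, norm_mul, norm_mul, norm_exp_I_mul, norm_exp_I_mul,
        one_mul, one_mul]
      have hp' : |c| / 2 ≤ |p.2.2 - ω + c| := by rw [hSdef] at hp; exact hp
      exact mul_le_mul_of_nonneg_right (coef_bound hm hc hp') (norm_nonneg _)
    · rw [Set.indicator_of_notMem hp, norm_zero]
      positivity
  have hΨBnorm : ∀ p, ‖ΨB p‖ ≤ 4 / (m ^ 2 * c ^ 2) * ‖D1 (D1 f) p‖ := by
    intro p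
    rw [hΨBdef]
    by_cases hp : p ∈ Sᶜ
    · rw [Set.indicator_of_mem hp, norm_mul, norm_mul, norm_mul, norm_exp_I_mul, norm_exp_I_mul,
        one_mul, one_mul]
      have h1 : |p.2.2 - ω + c| < |c| / 2 := by
        have := hp
        rw [hSdef] at this
        simpa [Set.mem_compl_iff, Set.mem_setOf_eq, not_le] using this
      have h2 : |c| ≤ |p.2.2 - ω + c| + |ω - p.2.2| := by
        have e : c = (p.2.2 - ω + c) + (ω - p.2.2) := by ring
        calc |c| = |(p.2.2 - ω + c) + (ω - p.2.2)| := by rw [← e]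
          _ ≤ _ := abs_add_le _ _
      have hp' : |c| / 2 ≤ |ω - p.2.2| := by linarith
      exact mul_le_mul_of_nonneg_right (coef_bound hm hc hp') (norm_nonneg _)
    · rw [Set.indicator_of_notMem hp, norm_zero]
      positivity
  have hΨAint : Integrable ΨA :=
    schwartz_dominated_integrable (h := D2 (D2 f)) hΨA_meas.aestronglyMeasurable hΨAnorm
  have hΨBint : Integrable ΨB :=
    schwartz_dominated_integrable (h := D1 (D1 f)) hΨB_meas.aestronglyMeasurable hΨBnorm
  have hsplit : ∫ p, Φ p = (∫ p, S.indicator Φ p) + ∫ p, Sᶜ.indicator Φ p := by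
    rw [← integral_add (hΦint.indicator hS) (hΦint.indicator hS.compl)]
    refine integral_congr_ae (Filter.Eventually.of_forall fun p => ?_)
    by_cases hp : p ∈ S <;> simp [Set.indicator_apply, hp]
  have hΦA2 : Integrable (S.indicator Φ) ((volume : Measure ℝ).prod (volume : Measure (ℝ × ℝ))) := by
    rw [← MeasureTheory.Measure.volume_eq_prod]
    exact hΦint.indicator hS
  have hΨA2 : Integrable ΨA ((volume : Measure ℝ).prod (volume : Measure (ℝ × ℝ))) := by
    rw [← MeasureTheory.Measure.volume_eq_prod]
    exact hΨAint
  have hAeq : ∫ p, S.indicator Φ p = ∫ p, ΨA p := by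
    rw [MeasureTheory.Measure.volume_eq_prod, integral_prod _ hΦA2, integral_prod _ hΨA2]
    congr 1
    funext t
    have hIq1 : Integrable (fun q : ℝ × ℝ => S.indicator Φ (t, q))
        ((volume : Measure ℝ).prod (volume : Measure ℝ)) := by
      apply slice2_integrable_bound f t 1 one_pos.le
      · exact ((hΦcont.measurable.indicator hS).comp measurable_prodMk_left).aestronglyMeasurable
      · intro q
        exact le_trans (norm_indicator_le_norm_self Φ _) (hΦnorm (t, q))
    have hIq2 : Integrable (fun q : ℝ × ℝ => ΨA (t, q))
        ((volume : Measure ℝ).prod (volume : Measure ℝ)) := by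
      apply slice2_integrable_bound (D2 (D2 f)) t (4 / (m ^ 2 * c ^ 2)) (by positivity)
      · exact (hΨA_meas.comp measurable_prodMk_left).aestronglyMeasurable
      · intro q
        exact hΨAnorm (t, q)
    rw [MeasureTheory.Measure.volume_eq_prod, integral_prod_symm _ hIq1, integral_prod_symm _ hIq2]
    congr 1
    funext E
    by_cases hE : |c| / 2 ≤ |E - ω + c|
    · have hmem : ∀ t' : ℝ, ((t, (t', E)) : ℝ × ℝ × ℝ) ∈ S := fun t' => by
        rw [hSdef]; exact hE
      have hKA : m * (E - ω + c) ≠ 0 :=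
        mul_ne_zero (ne_of_gt hm) (abs_pos.1 (lt_of_lt_of_le (half_pos (abs_pos.2 hc)) hE))
      have hkey := key1d (g := fun s => f (t, s, E)) (g1 := fun s => D2 f (t, s, E))
        (g2 := fun s => D2 (D2 f) (t, s, E))
        (fun s => hasDerivAt_sliceD2 f t E s) (fun s => hasDerivAt_sliceD2 (D2 f) t E s)
        (slice_integrable_t' f t E) (slice_integrable_t' (D2 f) t E)
        (slice_integrable_t' (D2 (D2 f)) t E) hKA
      calc (∫ t' : ℝ, S.indicator Φ (t, (t', E)))
          = ∫ t' : ℝ, Complex.exp (I * (((m * (ω - E) : ℝ)) : ℂ) * (t : ℂ)) *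
              (Complex.exp (I * (((m * (E - ω + c) : ℝ)) : ℂ) * (t' : ℂ)) * f (t, t', E)) := by
            congr 1
            funext t'
            rw [Set.indicator_of_mem (hmem t'), hΦdef]
            dsimp only
            rw [hphase t t' E, mul_assoc]
        _ = Complex.exp (I * (((m * (ω - E) : ℝ)) : ℂ) * (t : ℂ)) *
              ∫ t' : ℝ, Complex.exp (I * (((m * (E - ω + c) : ℝ)) : ℂ) * (t' : ℂ)) * f (t, t', E) :=
            integral_const_mul _ _
        _ = Complex.exp (I * (((m * (ω - E) : ℝ)) : ℂ) * (t : ℂ)) *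
              ((-1 / (((m * (E - ω + c) : ℝ)) : ℂ) ^ 2) *
                ∫ t' : ℝ, Complex.exp (I * (((m * (E - ω + c) : ℝ)) : ℂ) * (t' : ℂ)) *
                  D2 (D2 f) (t, t', E)) := by
            rw [hkey]
        _ = ∫ t' : ℝ, ΨA (t, (t', E)) := by
            rw [show (fun t' : ℝ => ΨA (t, (t', E)))
                = fun t' : ℝ => ((-1 / (((m * (E - ω + c) : ℝ)) : ℂ) ^ 2) *
                    Complex.exp (I * (((m * (ω - E) : ℝ)) : ℂ) * (t : ℂ))) *
                  (Complex.exp (I * (((m * (E - ω + c) : ℝ)) : ℂ) * (t' : ℂ)) *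
                    D2 (D2 f) (t, t', E))
              from funext fun t' => by
                rw [hΨAdef, Set.indicator_of_mem (hmem t')]
                dsimp only
                ring]
            rw [integral_const_mul]
            ring
    · have hnot : ∀ t' : ℝ, ((t, (t', E)) : ℝ × ℝ × ℝ) ∉ S := fun t' => by
        rw [hSdef]; exact hE
      rw [show (fun t' : ℝ => S.indicator Φ (t, (t', E))) = fun _ : ℝ => (0 : ℂ)
          from funext fun t' => Set.indicator_of_notMem (hnot t') Φ,
        show (fun t' : ℝ => ΨA (t, (t', E))) = fun _ : ℝ => (0 : ℂ)
          from funext fun t' => by rw [hΨAdef]; exact Set.indicator_of_notMem (hnot t') _]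
  have hΦB2 : Integrable (Sᶜ.indicator Φ) ((volume : Measure ℝ).prod (volume : Measure (ℝ × ℝ))) := by
    rw [← MeasureTheory.Measure.volume_eq_prod]
    exact hΦint.indicator hS.compl
  have hΨB2 : Integrable ΨB ((volume : Measure ℝ).prod (volume : Measure (ℝ × ℝ))) := by
    rw [← MeasureTheory.Measure.volume_eq_prod]
    exact hΨBint
  have hBeq : ∫ p, Sᶜ.indicator Φ p = ∫ p, ΨB p := by
    rw [MeasureTheory.Measure.volume_eq_prod, integral_prod_symm _ hΦB2,
      integral_prod_symm _ hΨB2]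
    congr 1
    funext q
    obtain ⟨t', E⟩ := q
    by_cases hE : |c| / 2 ≤ |E - ω + c|
    · have hnot : ∀ s : ℝ, ((s, (t', E)) : ℝ × ℝ × ℝ) ∉ Sᶜ := fun s => by
        rw [hSdef]
        simp only [Set.mem_compl_iff, Set.mem_setOf_eq, not_not]
        exact hE
      rw [show (fun s : ℝ => Sᶜ.indicator Φ (s, (t', E))) = fun _ : ℝ => (0 : ℂ)
          from funext fun s => Set.indicator_of_notMem (hnot s) Φ,
        show (fun s : ℝ => ΨB (s, (t', E))) = fun _ : ℝ => (0 : ℂ)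
          from funext fun s => by rw [hΨBdef]; exact Set.indicator_of_notMem (hnot s) _]
    · have h1 : |E - ω + c| < |c| / 2 := not_le.1 hE
      have h2 : |c| ≤ |E - ω + c| + |ω - E| := by
        have e : c = (E - ω + c) + (ω - E) := by ring
        calc |c| = |(E - ω + c) + (ω - E)| := by rw [← e]
          _ ≤ _ := abs_add_le _ _
      have hB' : |c| / 2 ≤ |ω - E| := by linarith
      have hmem : ∀ s : ℝ, ((s, (t', E)) : ℝ × ℝ × ℝ) ∈ Sᶜ := fun s => by
        rw [hSdef]
        simp only [Set.mem_compl_iff, Set.mem_setOf_eq, not_le]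
        exact h1
      have hKB : m * (ω - E) ≠ 0 :=
        mul_ne_zero (ne_of_gt hm) (abs_pos.1 (lt_of_lt_of_le (half_pos (abs_pos.2 hc)) hB'))
      have hkey := key1d (g := fun s => f (s, t', E)) (g1 := fun s => D1 f (s, t', E))
        (g2 := fun s => D1 (D1 f) (s, t', E))
        (fun s => hasDerivAt_sliceD1 f t' E s) (fun s => hasDerivAt_sliceD1 (D1 f) t' E s)
        (slice_integrable_t f t' E) (slice_integrable_t (D1 f) t' E)
        (slice_integrable_t (D1 (D1 f)) t' E) hKB
      calc (∫ s : ℝ, Sᶜ.indicator Φ (s, (t', E)))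
          = ∫ s : ℝ, Complex.exp (I * (((m * (E - ω + c) : ℝ)) : ℂ) * (t' : ℂ)) *
              (Complex.exp (I * (((m * (ω - E) : ℝ)) : ℂ) * (s : ℂ)) * f (s, t', E)) := by
            congr 1
            funext s
            rw [Set.indicator_of_mem (hmem s), hΦdef]
            dsimp only
            rw [hphase s t' E]
            ring
        _ = Complex.exp (I * (((m * (E - ω + c) : ℝ)) : ℂ) * (t' : ℂ)) *
              ∫ s : ℝ, Complex.exp (I * (((m * (ω - E) : ℝ)) : ℂ) * (s : ℂ)) * f (s, t', E) :=
            integral_const_mul _ _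
        _ = Complex.exp (I * (((m * (E - ω + c) : ℝ)) : ℂ) * (t' : ℂ)) *
              ((-1 / (((m * (ω - E) : ℝ)) : ℂ) ^ 2) *
                ∫ s : ℝ, Complex.exp (I * (((m * (ω - E) : ℝ)) : ℂ) * (s : ℂ)) *
                  D1 (D1 f) (s, t', E)) := by
            rw [hkey]
        _ = ∫ s : ℝ, ΨB (s, (t', E)) := by
            rw [show (fun s : ℝ => ΨB (s, (t', E)))
                = fun s : ℝ => ((-1 / (((m * (ω - E) : ℝ)) : ℂ) ^ 2) *
                    Complex.exp (I * (((m * (E - ω + c) : ℝ)) : ℂ) * (t' : ℂ))) *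
                  (Complex.exp (I * (((m * (ω - E) : ℝ)) : ℂ) * (s : ℂ)) *
                    D1 (D1 f) (s, t', E))
              from funext fun s => by
                rw [hΨBdef, Set.indicator_of_mem (hmem s)]
                dsimp only
                ring]
            rw [integral_const_mul]
            ring
  have hbA : ‖∫ p, ΨA p‖ ≤ 4 / (m ^ 2 * c ^ 2) * ∫ p : ℝ × ℝ × ℝ, ‖D2 (D2 f) p‖ :=
    calc ‖∫ p, ΨA p‖ ≤ ∫ p : ℝ × ℝ × ℝ, 4 / (m ^ 2 * c ^ 2) * ‖D2 (D2 f) p‖ :=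
          norm_integral_le_of_norm_le (((D2 (D2 f)).integrable.norm).const_mul _)
            (Filter.Eventually.of_forall hΨAnorm)
      _ = 4 / (m ^ 2 * c ^ 2) * ∫ p : ℝ × ℝ × ℝ, ‖D2 (D2 f) p‖ := integral_const_mul _ _
  have hbB : ‖∫ p, ΨB p‖ ≤ 4 / (m ^ 2 * c ^ 2) * ∫ p : ℝ × ℝ × ℝ, ‖D1 (D1 f) p‖ :=
    calc ‖∫ p, ΨB p‖ ≤ ∫ p : ℝ × ℝ × ℝ, 4 / (m ^ 2 * c ^ 2) * ‖D1 (D1 f) p‖ :=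
          norm_integral_le_of_norm_le (((D1 (D1 f)).integrable.norm).const_mul _)
            (Filter.Eventually.of_forall hΨBnorm)
      _ = 4 / (m ^ 2 * c ^ 2) * ∫ p : ℝ × ℝ × ℝ, ‖D1 (D1 f) p‖ := integral_const_mul _ _
  calc ‖∫ p, Φ p‖ = ‖(∫ p, ΨA p) + ∫ p, ΨB p‖ := by rw [hsplit, hAeq, hBeq]
    _ ≤ ‖∫ p, ΨA p‖ + ‖∫ p, ΨB p‖ := norm_add_le _ _
    _ ≤ 4 / (m ^ 2 * c ^ 2) * (∫ p : ℝ × ℝ × ℝ, ‖D2 (D2 f) p‖)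
        + 4 / (m ^ 2 * c ^ 2) * (∫ p : ℝ × ℝ × ℝ, ‖D1 (D1 f) p‖) := add_le_add hbA hbB
    _ = 4 / (m ^ 2 * c ^ 2) *
        ((∫ p : ℝ × ℝ × ℝ, ‖D2 (D2 f) p‖) + (∫ p : ℝ × ℝ × ℝ, ‖D1 (D1 f) p‖)) := by ring

/-- For every Schwartz function `f : ℝ³ → ℂ`, `ω ∈ ℝ` and real `c ≠ 0`,
`(1/λ²) ∭ e^{i(t'−t)(E−ω)/λ²} e^{it'c/λ²} f(t,t',E) dt dt' dE → 0` as `λ → 0⁺`;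
this produces the Kronecker delta `δ_{ω,ω'}` (with `c = ω − ω'`) in the master field
commutation relations. -/
theorem rescaling_limit_distinct_bohr_frequencies
    (f : SchwartzMap (ℝ × ℝ × ℝ) ℂ) (ω : ℝ) (c : ℝ) (hc : c ≠ 0) :
    Tendsto
      (fun lam : ℝ =>
        (1 / (lam : ℂ) ^ 2) *
          ∫ p : ℝ × ℝ × ℝ,
            Complex.exp (I * ((p.2.1 : ℂ) - p.1) * ((p.2.2 : ℂ) - ω) / (lam : ℂ) ^ 2) *
              Complex.exp (I * (p.2.1 : ℂ) * c / (lam : ℂ) ^ 2) * f p)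
      (nhdsWithin 0 (Set.Ioi 0))
      (nhds 0) := by
  set CA := ∫ p : ℝ × ℝ × ℝ, ‖D2 (D2 f) p‖ with hCAdef
  set CB := ∫ p : ℝ × ℝ × ℝ, ‖D1 (D1 f) p‖ with hCBdef
  rw [tendsto_zero_iff_norm_tendsto_zero]
  apply squeeze_zero' (g := fun lam : ℝ => 4 * (CA + CB) / c ^ 2 * lam ^ 2)
  · exact Filter.Eventually.of_forall fun _ => norm_nonneg _
  · filter_upwards [self_mem_nhdsWithin] with lam hlam
    have hlam0 : (0 : ℝ) < lam := hlam
    have hm : (0 : ℝ) < 1 / lam ^ 2 := by positivity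
    have hcast : ∀ z : ℂ, z / (lam : ℂ) ^ 2 = z * (((1 / lam ^ 2 : ℝ)) : ℂ) := by
      intro z
      push_cast
      rw [mul_one_div]
    have hrw : (fun p : ℝ × ℝ × ℝ =>
        Complex.exp (I * ((p.2.1 : ℂ) - p.1) * ((p.2.2 : ℂ) - ω) / (lam : ℂ) ^ 2) *
          Complex.exp (I * (p.2.1 : ℂ) * c / (lam : ℂ) ^ 2) * f p)
        = fun p : ℝ × ℝ × ℝ =>
        Complex.exp (I * ((p.2.1 : ℂ) - p.1) * ((p.2.2 : ℂ) - ω) * (((1 / lam ^ 2 : ℝ)) : ℂ)) *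
          Complex.exp (I * (p.2.1 : ℂ) * c * (((1 / lam ^ 2 : ℝ)) : ℂ)) * f p := by
      funext p
      rw [hcast, hcast]
    rw [hrw, norm_mul]
    have hnl : ‖(1 / ((lam : ℂ)) ^ 2 : ℂ)‖ = 1 / lam ^ 2 := by
      rw [norm_div, norm_one, norm_pow, Complex.norm_real, Real.norm_eq_abs, abs_of_pos hlam0]
    rw [hnl]
    have hmb := master_bound f ω c (1 / lam ^ 2) hc hm
    calc 1 / lam ^ 2 * ‖∫ p : ℝ × ℝ × ℝ,
          Complex.exp (I * ((p.2.1 : ℂ) - p.1) * ((p.2.2 : ℂ) - ω) * (((1 / lam ^ 2 : ℝ)) : ℂ)) *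
            Complex.exp (I * (p.2.1 : ℂ) * c * (((1 / lam ^ 2 : ℝ)) : ℂ)) * f p‖
        ≤ 1 / lam ^ 2 * (4 / ((1 / lam ^ 2) ^ 2 * c ^ 2) * (CA + CB)) :=
          mul_le_mul_of_nonneg_left hmb (by positivity)
      _ = 4 * (CA + CB) / c ^ 2 * lam ^ 2 := by
          field_simp
  · have h0 : Tendsto (fun lam : ℝ => 4 * (CA + CB) / c ^ 2 * lam ^ 2) (nhds 0)
        (nhds (4 * (CA + CB) / c ^ 2 * 0 ^ 2)) :=
      (continuous_const.mul (continuous_pow 2)).tendsto 0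
    have := h0.mono_left (nhdsWithin_le_nhds (s := Set.Ioi (0:ℝ)))
    simpa using this
end

section
/- For every Schwartz function f : ℝ² → ℂ, the limit lim_{λ→0⁺} (1/λ²) ∫_0^∞ ∫_{ℝ} e^{i s x / λ²} f(s, x) dx ds exists, the limit lim_{ε→0⁺} ∫_{ℝ} f(0, x)/(ε − i x) dx exists, and the two limits are equal. (This is the causal version of the rescaling limit, producing the factor 1/(i(x − i0)) in place of 2π δ(x) in the causal commutation relations of the master field.) -/
open Complex MeasureTheory Filter

open scoped FourierTransform Real

namespace CausalAux

open Set


lemma htg (a : ℝ) : Function.HasTemperateGrowth (fun x : ℝ => ((a, x) : ℝ × ℝ)) := by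
  have hL : ∀ x : ℝ, HasFDerivAt (fun x : ℝ => ((a, x) : ℝ × ℝ))
      ((0 : ℝ →L[ℝ] ℝ).prod (ContinuousLinearMap.id ℝ ℝ)) x := fun x =>
    (hasFDerivAt_const a x).prodMk (hasFDerivAt_id x)
  apply Function.HasTemperateGrowth.of_fderiv (k := 1) (C := |a| + 1)
  · have h : (fderiv ℝ (fun x : ℝ => ((a, x) : ℝ × ℝ))) =
        fun _ => (0 : ℝ →L[ℝ] ℝ).prod (ContinuousLinearMap.id ℝ ℝ) :=
      funext fun x => (hL x).fderiv
    rw [h]; exact Function.HasTemperateGrowth.const _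
  · exact fun x => (hL x).differentiableAt
  · intro x
    have h1 : ‖((a, x) : ℝ × ℝ)‖ = max ‖a‖ ‖x‖ := rfl
    have h2 : (0:ℝ) ≤ |a| := abs_nonneg a
    have h3 : (0:ℝ) ≤ ‖x‖ := norm_nonneg x
    rw [h1, pow_one]
    apply max_le
    · simp only [Real.norm_eq_abs]; nlinarith [abs_nonneg x, abs_nonneg a]
    · simp only [Real.norm_eq_abs]; nlinarith [abs_nonneg x, abs_nonneg a]

noncomputable def sliceS (a : ℝ) : SchwartzMap (ℝ × ℝ) ℂ →L[ℝ] SchwartzMap ℝ ℂ :=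
  SchwartzMap.compCLM ℝ (htg a)
    ⟨1, 1, fun x => by
      have : ‖x‖ ≤ ‖((a, x) : ℝ × ℝ)‖ := le_max_right _ _
      have h3 : (0:ℝ) ≤ ‖((a, x) : ℝ × ℝ)‖ := norm_nonneg _
      nlinarith⟩

lemma sliceS_apply (a : ℝ) (h : SchwartzMap (ℝ × ℝ) ℂ) (x : ℝ) : sliceS a h x = h (a, x) := rfl

lemma deriv_sliceS (a : ℝ) (h : SchwartzMap (ℝ × ℝ) ℂ) :
    deriv (⇑(sliceS a h)) = ⇑(sliceS a (LineDeriv.lineDerivOpCLM ℝ (SchwartzMap (ℝ × ℝ) ℂ) ((0, 1) : ℝ × ℝ) h)) := by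
  funext x
  set L : ℝ →L[ℝ] ℝ × ℝ := (0 : ℝ →L[ℝ] ℝ).prod (ContinuousLinearMap.id ℝ ℝ) with hLdef
  have hL : HasFDerivAt (fun x : ℝ => ((a, x) : ℝ × ℝ)) L x :=
    (hasFDerivAt_const a x).prodMk (hasFDerivAt_id x)
  have hcomp : HasFDerivAt (⇑(sliceS a h)) ((fderiv ℝ h (a, x)).comp L) x :=
    (h.differentiableAt.hasFDerivAt).comp x hL
  have := hcomp.hasDerivAt.deriv
  rw [this]
  have hL1 : L 1 = ((0, 1) : ℝ × ℝ) := by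
    simp [hLdef, ContinuousLinearMap.prod_apply]
  simp only [ContinuousLinearMap.coe_comp', Function.comp_apply, hL1]
  rw [sliceS_apply]; rfl


variable (f : SchwartzMap (ℝ × ℝ) ℂ)

lemma unif_bound (h : SchwartzMap (ℝ × ℝ) ℂ) :
    ∃ C : ℝ, 0 ≤ C ∧ ∀ a x : ℝ, ‖h (a, x)‖ ≤ C * (1 + x ^ 2)⁻¹ := by
  set S : ℝ := (Finset.Iic ((2, 0) : ℕ × ℕ)).sup
    (fun m => SchwartzMap.seminorm ℝ m.1 m.2) h with hS
  have hS0 : 0 ≤ S := apply_nonneg _ _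
  refine ⟨4 * S, by positivity, fun a x => ?_⟩
  have key := SchwartzMap.one_add_le_sup_seminorm_apply (𝕜 := ℝ) (m := ((2, 0) : ℕ × ℕ))
    (k := 2) (n := 0) le_rfl le_rfl h ((a, x) : ℝ × ℝ)
  rw [norm_iteratedFDeriv_zero] at key
  have key' : (1 + ‖((a, x) : ℝ × ℝ)‖) ^ 2 * ‖h (a, x)‖ ≤ 4 * S := by
    refine key.trans (le_of_eq ?_); norm_num [hS]
  set N : ℝ := ‖((a, x) : ℝ × ℝ)‖ with hN
  have hxN : |x| ≤ N := le_max_right _ _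
  have hN0 : 0 ≤ N := norm_nonneg _
  have hH0 : 0 ≤ ‖h (a, x)‖ := norm_nonneg _
  have hsq : x ^ 2 ≤ N ^ 2 := by nlinarith [_root_.sq_abs x, abs_nonneg x]
  have h2 : ‖h (a, x)‖ * (1 + x ^ 2) ≤ 4 * S := by nlinarith
  have hpos : (0:ℝ) < 1 + x ^ 2 := by positivity
  rw [← div_eq_mul_inv, le_div_iff₀ hpos]
  exact h2

lemma int_bound (h : SchwartzMap (ℝ × ℝ) ℂ) :
    ∃ C : ℝ, ∀ a : ℝ, (∫ x : ℝ, ‖h (a, x)‖) ≤ C := by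
  obtain ⟨D, hD0, hD⟩ := unif_bound h
  refine ⟨D * ∫ x : ℝ, (1 + x ^ 2)⁻¹, fun a => ?_⟩
  rw [← integral_const_mul]
  have hint : Integrable (fun x : ℝ => ‖h (a, x)‖) := by
    have := (sliceS a h).integrable (μ := volume) |>.norm
    simpa only [sliceS_apply] using this
  exact integral_mono hint (integrable_inv_one_add_sq.const_mul D) (fun x => hD a x)

lemma norm_exp_I_mul (u x : ℝ) : ‖Complex.exp (I * u * x)‖ = 1 := by
  have h : I * (u:ℂ) * (x:ℂ) = ((u * x : ℝ) : ℂ) * I := by push_cast; ring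
  rw [h, Complex.norm_exp_ofReal_mul_I]

lemma cont_param (σ τ : ℝ → ℝ) (hσ : Continuous σ) (hτ : Continuous τ) :
    Continuous fun t => ∫ x : ℝ, Complex.exp (I * τ t * x) * f (σ t, x) := by
  obtain ⟨D, hD0, hD⟩ := unif_bound f
  apply continuous_of_dominated (bound := fun x => D * (1 + x ^ 2)⁻¹)
  · intro t
    apply Continuous.aestronglyMeasurable
    exact (Complex.continuous_exp.comp (by continuity)).mul
      (f.continuous.comp (by continuity))
  · intro t
    apply ae_of_all
    intro x
    rw [norm_mul, norm_exp_I_mul, one_mul]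
    exact hD _ _
  · exact integrable_inv_one_add_sq.const_mul D
  · apply ae_of_all
    intro x
    exact (Complex.continuous_exp.comp (by continuity)).mul
      (f.continuous.comp (by continuity))


-- norm of fourier integral bounded by integral of norm of the slice
lemma norm_fourier_le (φ : SchwartzMap ℝ ℂ) (w : ℝ) :
    ‖𝓕 ⇑φ w‖ ≤ ∫ x : ℝ, ‖φ x‖ := by
  rw [Real.fourier_real_eq_integral_exp_smul]
  refine (norm_integral_le_integral_norm _).trans (le_of_eq ?_)
  congr 1
  funext v
  rw [norm_smul, Complex.norm_exp_ofReal_mul_I]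
  simp

lemma decay_bound (f : SchwartzMap (ℝ × ℝ) ℂ) :
    ∃ C : ℝ, ∀ a u : ℝ,
      ‖∫ x : ℝ, Complex.exp (I * u * x) * f (a, x)‖ ≤ C * (1 + u ^ 2)⁻¹ := by
  set f1 := LineDeriv.lineDerivOpCLM ℝ (SchwartzMap (ℝ × ℝ) ℂ) ((0, 1) : ℝ × ℝ) f with hf1
  set f2 := LineDeriv.lineDerivOpCLM ℝ (SchwartzMap (ℝ × ℝ) ℂ) ((0, 1) : ℝ × ℝ) f1 with hf2
  obtain ⟨C0, hC0⟩ := int_bound f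
  obtain ⟨C2, hC2⟩ := int_bound f2
  refine ⟨C0 + C2, fun a u => ?_⟩
  set φ := sliceS a f with hφ
  set φ1 := sliceS a f1 with hφ1
  set φ2 := sliceS a f2 with hφ2
  have hd1 : deriv ⇑φ = ⇑φ1 := deriv_sliceS a f
  have hd2 : deriv ⇑φ1 = ⇑φ2 := deriv_sliceS a f1
  set w : ℝ := -u / (2 * π) with hw
  -- identify our integral with the Fourier integral of φ at w
  have hgw : (∫ x : ℝ, Complex.exp (I * u * x) * f (a, x)) = 𝓕 ⇑φ w := by
    rw [Real.fourier_real_eq_integral_exp_smul]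
    congr 1
    funext v
    rw [smul_eq_mul, sliceS_apply]
    congr 2
    have harg : -2 * π * v * w = u * v := by
      rw [hw]; field_simp
    rw [harg]
    push_cast
    ring
  have hF1 : 𝓕 (deriv ⇑φ) = fun w : ℝ => (2 * π * I * w) • 𝓕 ⇑φ w :=
    Real.fourier_deriv (φ.integrable) (φ.differentiable)
      (by rw [hd1]; exact φ1.integrable)
  have hF2 : 𝓕 (deriv ⇑φ1) = fun w : ℝ => (2 * π * I * w) • 𝓕 ⇑φ1 w :=
    Real.fourier_deriv (φ1.integrable) (φ1.differentiable)
      (by rw [hd2]; exact φ2.integrable)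
  have hcoef : (2 * (π:ℂ) * I * (w:ℝ)) = -I * u := by
    rw [hw]
    have hπ : ((π:ℝ):ℂ) ≠ 0 := Complex.ofReal_ne_zero.mpr Real.pi_ne_zero
    push_cast
    field_simp
  have hkey : 𝓕 ⇑φ2 w = (-(u:ℂ) ^ 2) * 𝓕 ⇑φ w := by
    have e1 : 𝓕 ⇑φ2 w = (2 * π * I * w) • 𝓕 ⇑φ1 w := by
      rw [← hd2]; rw [hF2]
    have e2 : 𝓕 ⇑φ1 w = (2 * π * I * w) • 𝓕 ⇑φ w := by
      rw [← hd1]; rw [hF1]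
    rw [e1, e2, smul_smul, smul_eq_mul, hcoef]
    ring_nf
    rw [Complex.I_sq]
    ring
  -- (1 + u^2) * 𝓕 φ w = 𝓕 φ w - 𝓕 φ2 w
  have hsum : ((1 + (u:ℂ) ^ 2)) * 𝓕 ⇑φ w = 𝓕 ⇑φ w - 𝓕 ⇑φ2 w := by
    rw [hkey]; ring
  have hb0 : ‖𝓕 ⇑φ w‖ ≤ C0 := by
    refine (norm_fourier_le φ w).trans ?_
    have he : (∫ x : ℝ, ‖φ x‖) = ∫ x : ℝ, ‖f (a, x)‖ := by
      congr 1
    rw [he]; exact hC0 a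
  have hb2 : ‖𝓕 ⇑φ2 w‖ ≤ C2 := by
    refine (norm_fourier_le φ2 w).trans ?_
    have he : (∫ x : ℝ, ‖φ2 x‖) = ∫ x : ℝ, ‖f2 (a, x)‖ := by
      congr 1
    rw [he]; exact hC2 a
  have hnorm1 : ‖(1 + (u:ℂ) ^ 2)‖ = 1 + u ^ 2 := by
    have : (1 + (u:ℂ) ^ 2) = ((1 + u ^ 2 : ℝ) : ℂ) := by push_cast; ring
    rw [this, Complex.norm_real, Real.norm_eq_abs, abs_of_pos (by positivity)]
  have hineq : (1 + u ^ 2) * ‖𝓕 ⇑φ w‖ ≤ C0 + C2 := by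
    calc (1 + u ^ 2) * ‖𝓕 ⇑φ w‖ = ‖((1 + (u:ℂ) ^ 2)) * 𝓕 ⇑φ w‖ := by
          rw [norm_mul, hnorm1]
      _ = ‖𝓕 ⇑φ w - 𝓕 ⇑φ2 w‖ := by rw [hsum]
      _ ≤ ‖𝓕 ⇑φ w‖ + ‖𝓕 ⇑φ2 w‖ := norm_sub_le _ _
      _ ≤ C0 + C2 := add_le_add hb0 hb2
  rw [hgw, ← div_eq_mul_inv, le_div_iff₀ (by positivity : (0:ℝ) < 1 + u ^ 2)]
  linarith [hineq]


lemma integrableOn_exp_c (c : ℂ) (hc : c.re < 0) :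
    IntegrableOn (fun u : ℝ => Complex.exp (c * u)) (Ioi (0:ℝ)) := by
  have hmono := exp_neg_integrableOn_Ioi 0 (show (0:ℝ) < -c.re by linarith)
  refine hmono.mono' ?_ ?_
  · exact (Complex.continuous_exp.comp
      (continuous_const.mul Complex.continuous_ofReal)).aestronglyMeasurable
  · apply ae_of_all
    intro u
    have : ‖Complex.exp (c * u)‖ = Real.exp ((c * u).re) := Complex.norm_exp _
    rw [this]
    have hre : (c * (u:ℂ)).re = c.re * u := by simp [Complex.mul_re]
    rw [hre]
    apply le_of_eq
    congr 1
    ring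

lemma integral_exp_Ioi (c : ℂ) (hc : c.re < 0) :
    ∫ u in Ioi (0:ℝ), Complex.exp (c * u) = -c⁻¹ := by
  have hc0 : c ≠ 0 := by
    intro h; rw [h] at hc; simp at hc
  have hint := integrableOn_exp_c c hc
  have lim1 : Tendsto (fun b : ℝ => ∫ u in (0:ℝ)..b, Complex.exp (c * u)) atTop
      (nhds (∫ u in Ioi (0:ℝ), Complex.exp (c * u))) :=
    intervalIntegral_tendsto_integral_Ioi 0 hint tendsto_id
  have heq : ∀ b : ℝ, (∫ u in (0:ℝ)..b, Complex.exp (c * u))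
      = (Complex.exp (c * b) - 1) / c := by
    intro b
    rw [integral_exp_mul_complex hc0]
    norm_num
  have hexp : Tendsto (fun b : ℝ => Complex.exp (c * b)) atTop (nhds 0) := by
    rw [tendsto_zero_iff_norm_tendsto_zero]
    have hn : ∀ b : ℝ, ‖Complex.exp (c * b)‖ = Real.exp (c.re * b) := by
      intro b
      rw [Complex.norm_exp]
      congr 1
      simp [Complex.mul_re]
    simp_rw [hn]
    refine Real.tendsto_exp_atBot.comp ?_
    exact Tendsto.const_mul_atTop_of_neg hc tendsto_id
  have lim2 : Tendsto (fun b : ℝ => ∫ u in (0:ℝ)..b, Complex.exp (c * u)) atTop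
      (nhds (-c⁻¹)) := by
    simp_rw [heq]
    have := (hexp.sub (tendsto_const_nhds (x := (1:ℂ)))).div_const c
    convert this using 2
    rw [zero_sub, neg_div, one_div]
  exact tendsto_nhds_unique lim1 lim2


noncomputable def gdef (f : SchwartzMap (ℝ × ℝ) ℂ) (a u : ℝ) : ℂ :=
  ∫ x : ℝ, Complex.exp (I * u * x) * f (a, x)


end CausalAux

open CausalAux Set in
/-- Causal version of the rescaling limit: for every Schwartz function
`f : ℝ² → ℂ`, the limit as `λ → 0⁺` of `(1/λ²) ∫₀^∞ ∫_ℝ e^{isx/λ²} f(s,x) dx ds` exists,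
the limit as `ε → 0⁺` of `∫_ℝ f(0,x)/(ε − ix) dx` exists, and they coincide: the factor
`1/(i(x − i0))` replaces `2π δ(x)` in the causal commutation relations. -/
theorem causal_rescaling_limit
    (f : SchwartzMap (ℝ × ℝ) ℂ) :
    ∃ L : ℂ,
      Tendsto
        (fun lam : ℝ =>
          (1 / (lam : ℂ) ^ 2) *
            ∫ s in Set.Ioi (0 : ℝ),
              ∫ x : ℝ, Complex.exp (I * s * x / (lam : ℂ) ^ 2) * f (s, x))
        (nhdsWithin 0 (Set.Ioi 0)) (nhds L) ∧
      Tendsto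
        (fun eps : ℝ =>
          ∫ x : ℝ, f (0, x) / ((eps : ℂ) - I * x))
        (nhdsWithin 0 (Set.Ioi 0)) (nhds L) := by
  classical
  obtain ⟨C, hC⟩ := decay_bound f
  have hC' : ∀ a u : ℝ, ‖gdef f a u‖ ≤ C * (1 + u ^ 2)⁻¹ := hC
  have hboundInt : IntegrableOn (fun u : ℝ => C * (1 + u ^ 2)⁻¹) (Ioi (0:ℝ)) :=
    (integrable_inv_one_add_sq.const_mul C).integrableOn
  have hcont0 : Continuous fun u : ℝ => gdef f 0 u :=
    cont_param f (fun _ => 0) id continuous_const continuous_id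
  refine ⟨∫ u in Ioi (0:ℝ), gdef f 0 u, ?_, ?_⟩
  · -- first limit
    have key1 : Tendsto (fun lam : ℝ => ∫ u in Ioi (0:ℝ), gdef f (lam ^ 2 * u) u)
        (nhdsWithin 0 (Set.Ioi 0)) (nhds (∫ u in Ioi (0:ℝ), gdef f 0 u)) := by
      apply tendsto_integral_filter_of_dominated_convergence
        (bound := fun u : ℝ => C * (1 + u ^ 2)⁻¹)
      · apply Eventually.of_forall
        intro lam
        exact ((cont_param f (fun u => lam ^ 2 * u) id (by continuity)
          continuous_id).aestronglyMeasurable).restrict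
      · apply Eventually.of_forall
        intro lam
        exact ae_of_all _ fun u => hC' _ _
      · exact hboundInt
      · apply ae_of_all
        intro u
        have hsq : Tendsto (fun lam : ℝ => lam ^ 2 * u) (nhdsWithin 0 (Set.Ioi 0)) (nhds 0) := by
          have h1 : Tendsto (fun lam : ℝ => lam ^ 2 * u) (nhds 0) (nhds 0) := by
            have := ((continuous_pow 2).mul (continuous_const (y := u))).tendsto (0:ℝ)
            exact ((continuous_pow 2).mul (continuous_const (y := u))).tendsto' (0:ℝ) 0 (by simp)
          exact h1.mono_left nhdsWithin_le_nhds
        have hcont : Continuous fun a : ℝ => gdef f a u :=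
          cont_param f id (fun _ => u) continuous_id continuous_const
        exact (hcont.tendsto 0).comp hsq
    have eq1 : (fun lam : ℝ =>
          (1 / (lam : ℂ) ^ 2) *
            ∫ s in Set.Ioi (0 : ℝ),
              ∫ x : ℝ, Complex.exp (I * s * x / (lam : ℂ) ^ 2) * f (s, x))
        =ᶠ[nhdsWithin 0 (Set.Ioi 0)]
        (fun lam : ℝ => ∫ u in Ioi (0:ℝ), gdef f (lam ^ 2 * u) u) := by
      filter_upwards [self_mem_nhdsWithin] with lam hlam
      have hlam0 : (0:ℝ) < lam := hlam
      have hb : (0:ℝ) < lam ^ 2 := by positivity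
      have hlamC : ((lam:ℝ):ℂ) ≠ 0 := Complex.ofReal_ne_zero.mpr hlam0.ne'
      obtain ⟨G, hG⟩ : ∃ G : ℝ → ℂ,
          G = fun s : ℝ => ∫ x : ℝ, Complex.exp (I * s * x / (lam : ℂ) ^ 2) * f (s, x) :=
        ⟨_, rfl⟩
      have hsub := integral_comp_mul_left_Ioi G 0 hb
      rw [mul_zero] at hsub
      have hGg : (fun u : ℝ => gdef f (lam ^ 2 * u) u) = fun u : ℝ => G (lam ^ 2 * u) := by
        funext u
        rw [hG, gdef]
        congr 1
        funext x
        congr 2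
        push_cast
        field_simp
      rw [hGg, hsub, ← hG, Complex.real_smul]
      congr 1
      push_cast
      field_simp
    exact key1.congr' eq1.symm
  · -- second limit
    have key2 : Tendsto (fun eps : ℝ => ∫ u in Ioi (0:ℝ),
          Complex.exp (-(eps:ℂ) * u) * gdef f 0 u)
        (nhdsWithin 0 (Set.Ioi 0)) (nhds (∫ u in Ioi (0:ℝ), gdef f 0 u)) := by
      apply tendsto_integral_filter_of_dominated_convergence
        (bound := fun u : ℝ => C * (1 + u ^ 2)⁻¹)
      · apply Eventually.of_forall
        intro eps
        refine Continuous.aestronglyMeasurable ?_ |>.restrict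
        exact (Complex.continuous_exp.comp (by continuity)).mul hcont0
      · filter_upwards [self_mem_nhdsWithin] with eps heps
        rw [ae_restrict_iff' measurableSet_Ioi]
        apply ae_of_all
        intro u hu
        have hu0 : (0:ℝ) < u := hu
        have heps0 : (0:ℝ) < eps := heps
        have hne : ‖Complex.exp (-(eps:ℂ) * u)‖ = Real.exp (-(eps * u)) := by
          have harg : -(eps:ℂ) * u = ((-(eps * u) : ℝ) : ℂ) := by push_cast; ring
          rw [harg, Complex.norm_exp, Complex.ofReal_re]
        rw [norm_mul, hne]
        have hle1 : Real.exp (-(eps * u)) ≤ 1 := by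
          rw [Real.exp_le_one_iff]
          nlinarith
        calc Real.exp (-(eps * u)) * ‖gdef f 0 u‖ ≤ 1 * ‖gdef f 0 u‖ :=
              mul_le_mul_of_nonneg_right hle1 (norm_nonneg _)
          _ = ‖gdef f 0 u‖ := one_mul _
          _ ≤ C * (1 + u ^ 2)⁻¹ := hC' _ _
      · exact hboundInt
      · apply ae_of_all
        intro u
        have hcont : Continuous fun eps : ℝ => Complex.exp (-(eps:ℂ) * u) * gdef f 0 u :=
          (Complex.continuous_exp.comp (by continuity)).mul continuous_const
        have h0 : Tendsto (fun eps : ℝ => Complex.exp (-(eps:ℂ) * u) * gdef f 0 u)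
            (nhdsWithin 0 (Set.Ioi 0)) (nhds (Complex.exp (-(((0:ℝ)):ℂ) * u) * gdef f 0 u)) :=
          ((hcont.tendsto 0).mono_left nhdsWithin_le_nhds)
        simpa using h0
    have eq2 : (fun eps : ℝ => ∫ x : ℝ, f (0, x) / ((eps : ℂ) - I * x))
        =ᶠ[nhdsWithin 0 (Set.Ioi 0)]
        (fun eps : ℝ => ∫ u in Ioi (0:ℝ), Complex.exp (-(eps:ℂ) * u) * gdef f 0 u) := by
      filter_upwards [self_mem_nhdsWithin] with eps heps
      have heps0 : (0:ℝ) < eps := heps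
      have hrelt : ∀ x : ℝ, ((-(eps:ℂ) + I * x)).re < 0 := by
        intro x
        simp [heps0]
      -- step 1: pointwise identity
      have hx : ∀ x : ℝ, f ((0:ℝ), x) / ((eps : ℂ) - I * x)
          = ∫ u in Ioi (0:ℝ), Complex.exp ((-(eps:ℂ) + I * x) * u) * f (0, x) := by
        intro x
        rw [integral_mul_const, integral_exp_Ioi _ (hrelt x)]
        rw [div_eq_mul_inv, mul_comm]
        congr 1
        rw [← inv_neg]
        congr 1
        ring
      have hstep1 : (∫ x : ℝ, f ((0:ℝ), x) / ((eps : ℂ) - I * x))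
          = ∫ x : ℝ, ∫ u in Ioi (0:ℝ), Complex.exp ((-(eps:ℂ) + I * x) * u) * f (0, x) :=
        integral_congr_ae (ae_of_all _ fun x => hx x)
      rw [hstep1]
      -- step 2: Fubini
      have hInt : Integrable (Function.uncurry fun (x : ℝ) (u : ℝ) =>
          Complex.exp ((-(eps:ℂ) + I * x) * u) * f (0, x))
          (volume.prod (volume.restrict (Ioi (0:ℝ)))) := by
        have hmeas : AEStronglyMeasurable (Function.uncurry fun (x : ℝ) (u : ℝ) =>
            Complex.exp ((-(eps:ℂ) + I * x) * u) * f (0, x))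
            (volume.prod (volume.restrict (Ioi (0:ℝ)))) := by
          apply Continuous.aestronglyMeasurable
          apply Continuous.mul
          · apply Complex.continuous_exp.comp
            apply Continuous.mul
            · exact (continuous_const.add (continuous_const.mul
                (Complex.continuous_ofReal.comp continuous_fst)))
            · exact Complex.continuous_ofReal.comp continuous_snd
          · exact f.continuous.comp (.prodMk continuous_const
              (continuous_fst))
        have hg2 : Integrable (fun z : ℝ × ℝ => ‖f ((0:ℝ), z.1)‖ * Real.exp (-eps * z.2))
            (volume.prod (volume.restrict (Ioi (0:ℝ)))) := by
          refine Integrable.mul_prod (f := fun x : ℝ => ‖f ((0:ℝ), x)‖)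
            (g := fun u : ℝ => Real.exp (-eps * u)) ?_ ?_
          · have := (sliceS 0 f).integrable (μ := volume) |>.norm
            simpa only [sliceS_apply] using this
          · exact exp_neg_integrableOn_Ioi 0 heps0
        refine hg2.mono' hmeas ?_
        apply ae_of_all
        rintro ⟨x, u⟩
        rw [Function.uncurry_apply_pair, norm_mul]
        have hnorm : ‖Complex.exp ((-(eps:ℂ) + I * x) * u)‖ = Real.exp (-eps * u) := by
          have harg : ((-(eps:ℂ) + I * x) * u)
              = Complex.ofReal (-eps * u) + Complex.ofReal (x * u) * I := by
            push_cast; ring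
          rw [harg, Complex.exp_add, norm_mul, Complex.norm_exp_ofReal_mul_I, mul_one,
            Complex.norm_exp_ofReal]
        rw [hnorm]
        exact (mul_comm _ _).le
      rw [integral_integral_swap hInt]
      -- step 3: inner integral
      apply integral_congr_ae
      apply ae_of_all
      intro u
      simp only [gdef]
      rw [← integral_const_mul]
      apply integral_congr_ae
      apply ae_of_all
      intro x
      show Complex.exp ((-(eps:ℂ) + I * x) * u) * f (0, x)
          = Complex.exp (-(eps:ℂ) * u) * (Complex.exp (I * u * x) * f (0, x))
      rw [← mul_assoc, ← Complex.exp_add]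
      congr 2
      ring
    exact key2.congr' eq2.symm
end

section
/- Let g ∈ H and suppose the function t ↦ ⟨g, U_t g⟩ is integrable on ℝ. Then for every E ∈ ℝ the integral ∫_{ℝ} ⟨g, U_t g⟩ e^{−itE} dt is a nonnegative real number. (In particular, with γ(E) := ∫_{−∞}^0 ⟨g, U_t g⟩ e^{−itE} dt one gets 2 Re γ(E) = ∫_{ℝ} ⟨g, U_t g⟩ e^{−itE} dt ≥ 0, the positivity Re γ_ε(E) ≥ 0 needed for the Lindblad form of the quantum Markovian generator.) -/
open Complex MeasureTheory Filter Topology intervalIntegral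

lemma cesaro_integral_aux {Φ : ℝ → ℂ} (hΦ : Continuous Φ) {L : ℂ}
    (h : Tendsto Φ atTop (𝓝 L)) :
    Tendsto (fun n : ℕ => (n : ℝ)⁻¹ • ∫ x in (0:ℝ)..(n:ℝ), Φ x) atTop (𝓝 L) := by
  have hu : Tendsto (fun k : ℕ => ∫ x in (k:ℝ)..((k:ℝ)+1), Φ x) atTop (𝓝 L) := by
    rw [Metric.tendsto_atTop]
    intro ε hε
    obtain ⟨M, hM⟩ := (Filter.eventually_atTop).mp
      (h.eventually (Metric.ball_mem_nhds L (half_pos hε)))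
    refine ⟨⌈M⌉₊, fun k hk => ?_⟩
    have hkM : M ≤ (k : ℝ) := le_trans (Nat.le_ceil M) (by exact_mod_cast hk)
    have hdiff : (∫ x in (k:ℝ)..((k:ℝ)+1), Φ x) - L
        = ∫ x in (k:ℝ)..((k:ℝ)+1), (Φ x - L) := by
      rw [intervalIntegral.integral_sub (hΦ.intervalIntegrable _ _)
        (intervalIntegrable_const), intervalIntegral.integral_const]
      simp
    rw [dist_eq_norm, hdiff]
    have hb : ‖∫ x in (k:ℝ)..((k:ℝ)+1), (Φ x - L)‖ ≤ (ε/2) * |((k:ℝ)+1) - k| := by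
      refine intervalIntegral.norm_integral_le_of_norm_le_const fun x hx => ?_
      have hx' : (k:ℝ) < x := by
        rcases Set.mem_uIoc.mp hx with h1 | h1
        · exact h1.1
        · linarith [h1.1, h1.2]
      have := hM x (le_trans hkM hx'.le)
      rw [dist_eq_norm] at this
      exact this.le
    simp only [add_sub_cancel_left, abs_one, mul_one] at hb
    linarith
  have hsum : ∀ n : ℕ, (∫ x in (0:ℝ)..(n:ℝ), Φ x)
      = ∑ i ∈ Finset.range n, ∫ x in ((i:ℕ):ℝ)..(((i+1:ℕ)):ℝ), Φ x := by
    intro n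
    rw [intervalIntegral.sum_integral_adjacent_intervals
      (fun k _ => hΦ.intervalIntegrable _ _)]
    simp
  have := hu.cesaro_smul
  refine this.congr fun n => ?_
  rw [hsum]
  congr 1
  refine Finset.sum_congr rfl fun i _ => ?_
  push_cast
  ring_nf

/-- Let `(U_t)` be a strongly continuous one-parameter unitary group on a
complex Hilbert space `H`, `g ∈ H`, and suppose `t ↦ ⟨g, U_t g⟩` is integrable on `ℝ`.
Then for every `E ∈ ℝ` the integral `∫ ⟨g, U_t g⟩ e^{−itE} dt` is a nonnegative real
number. (Hence `2 Re γ(E) = ∫ ⟨g, U_t g⟩ e^{−itE} dt ≥ 0`, the positivity needed for the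
Lindblad form of the quantum Markovian generator.) -/
theorem fourier_transform_of_autocorrelation_nonneg
    {H : Type*} [NormedAddCommGroup H] [InnerProductSpace ℂ H] [CompleteSpace H]
    (U : ℝ → H →L[ℂ] H)
    (hU_unitary : ∀ t : ℝ, star (U t) * U t = 1 ∧ U t * star (U t) = 1)
    (hU_zero : U 0 = 1)
    (hU_add : ∀ s t : ℝ, U (s + t) = U s * U t)
    (hU_cont : ∀ x : H, Continuous fun t : ℝ => U t x)
    (g : H)
    (hint : Integrable (fun t : ℝ => (inner ℂ g (U t g) : ℂ))) :
    ∀ E : ℝ, ∃ r : ℝ, 0 ≤ r ∧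
      ∫ t : ℝ, (inner ℂ g (U t g) : ℂ) * Complex.exp (-(I * t * E)) = (r : ℂ) := by
  intro E
  set f : ℝ → ℂ := fun t => (inner ℂ g (U t g) : ℂ) with hf
  set φ : ℝ → ℂ := fun t => f t * Complex.exp (-(I * t * E)) with hφdef
  -- star (U t) = U (-t)
  have hUstar : ∀ t : ℝ, star (U t) = U (-t) := by
    intro t
    have h2 : U t * U (-t) = 1 := by rw [← hU_add]; simp [hU_zero]
    calc star (U t) = star (U t) * (U t * U (-t)) := by rw [h2, mul_one]
      _ = (star (U t) * U t) * U (-t) := by rw [mul_assoc]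
      _ = U (-t) := by rw [(hU_unitary t).1, one_mul]
  -- continuity
  have hfc : Continuous f := Continuous.inner continuous_const (hU_cont g)
  have hexpc : Continuous fun t : ℝ => Complex.exp (-(I * t * E)) := by
    apply Complex.continuous_exp.comp
    continuity
  have hφc : Continuous φ := hfc.mul hexpc
  have hφint : Integrable φ := by
    refine hint.norm.mono' hφc.aestronglyMeasurable (ae_of_all _ fun t => ?_)
    have : ‖Complex.exp (-(I * t * E))‖ = 1 := by
      rw [Complex.norm_exp]
      simp
    rw [norm_mul, this, mul_one]
  -- the vector-valued function
  set v : ℝ → H := fun t => Complex.exp (-(I * t * E)) • U t g with hv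
  have hvc : Continuous v := hexpc.smul (hU_cont g)
  -- key inner product identity
  have key : ∀ s t : ℝ, (inner ℂ (v s) (v t) : ℂ) = φ (t - s) := by
    intro s t
    have h1 : (inner ℂ (U s g) (U t g) : ℂ) = inner ℂ g (U (t - s) g) := by
      rw [← ContinuousLinearMap.adjoint_inner_right]
      rw [← ContinuousLinearMap.star_eq_adjoint, hUstar]
      have : U (-s) (U t g) = U (t - s) g := by
        rw [show t - s = -s + t by ring, hU_add]; rfl
      rw [this]
    simp only [hv, inner_smul_left, inner_smul_right, h1]
    simp only [map_neg, map_mul, Complex.conj_I, Complex.conj_ofReal, ← Complex.exp_conj]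
    have hexp : -(I * (t:ℂ) * E) + -(-I * (s:ℂ) * E) = -(I * ((t - s : ℝ):ℂ) * E) := by
      push_cast; ring
    rw [mul_comm, mul_assoc, mul_comm ((inner ℂ g (U (t-s) g) : ℂ)), ← mul_assoc,
      ← Complex.exp_add]
    rw [show -(-I * (s:ℂ) * E) + -(I * (t:ℂ) * E) = -(I * ((t - s : ℝ):ℂ) * E) by push_cast; ring]
    rw [hφdef]
    ring
  -- Φ : cumulative integral
  set Φ : ℝ → ℂ := fun x => ∫ u in Set.Iic x, φ u with hΦdef
  have hΦeq : ∀ x : ℝ, Φ x = Φ 0 + ∫ u in (0:ℝ)..x, φ u := by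
    intro x
    rw [← integral_Iic_sub_Iic (hφint.integrableOn) (hφint.integrableOn)]
    ring
  have hΦc : Continuous Φ := by
    have := intervalIntegral.continuous_primitive
      (fun a b => hφint.intervalIntegrable) (0:ℝ)
    rw [show Φ = fun x => Φ 0 + ∫ u in (0:ℝ)..x, φ u from funext hΦeq]
    exact continuous_const.add this
  have hΦtop : Tendsto Φ atTop (𝓝 (∫ t, φ t)) :=
    (MeasureTheory.aecover_Iic tendsto_id).integral_tendsto_of_countably_generated hφint
  have hΦbot : Tendsto Φ atBot (𝓝 0) := by
    have h1 : Tendsto (fun x : ℝ => ∫ u in Set.Ioi x, φ u) atBot (𝓝 (∫ t, φ t)) :=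
      (MeasureTheory.aecover_Ioi tendsto_id).integral_tendsto_of_countably_generated hφint
    have h2 : ∀ x : ℝ, Φ x = (∫ t, φ t) - ∫ u in Set.Ioi x, φ u := by
      intro x
      have := MeasureTheory.integral_add_compl (measurableSet_Iic (a := x)) hφint
      rw [Set.compl_Iic] at this
      rw [hΦdef]; rw [← this]; ring
    rw [show Φ = fun x => (∫ t, φ t) - ∫ u in Set.Ioi x, φ u from funext h2]
    simpa using (tendsto_const_nhds (x := ∫ t, φ t)).sub h1
  -- the norm-squared double-integral identity
  set F : ℕ → H := fun n => ∫ t in Set.Ioc (0:ℝ) (n:ℝ), v t with hF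
  have hvint : ∀ n : ℕ, IntegrableOn v (Set.Ioc (0:ℝ) (n:ℝ)) := fun n =>
    hvc.integrableOn_Ioc
  have hdouble : ∀ n : ℕ, (inner ℂ (F n) (F n) : ℂ)
      = ∫ s in Set.Ioc (0:ℝ) (n:ℝ), ∫ t in Set.Ioc (0:ℝ) (n:ℝ), φ (t - s) := by
    intro n
    have step1 : (inner ℂ (F n) (F n) : ℂ)
        = ∫ s in Set.Ioc (0:ℝ) (n:ℝ), (inner ℂ (v s) (F n) : ℂ) := by
      have hcj : ∀ s : ℝ, (inner ℂ (v s) (F n) : ℂ) = (starRingEnd ℂ) (inner ℂ (F n) (v s) : ℂ) :=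
        fun s => (inner_conj_symm _ _).symm
      simp_rw [hcj]
      rw [integral_conj, integral_inner (hvint n) (F n), inner_conj_symm]
    rw [step1]
    congr 1
    ext s
    show (inner ℂ (v s) (∫ t in Set.Ioc (0:ℝ) (n:ℝ), v t) : ℂ) = _
    rw [← integral_inner (hvint n) (v s)]
    congr 1
    ext t
    exact key s t
  -- rewrite the double integral via Φ
  have hswap : ∀ n : ℕ, (inner ℂ (F n) (F n) : ℂ)
      = (∫ u in (0:ℝ)..(n:ℝ), Φ u) - ∫ u in (0:ℝ)..(n:ℝ), Φ (-u) := by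
    intro n
    rw [hdouble n]
    have h0n : (0:ℝ) ≤ (n:ℝ) := Nat.cast_nonneg n
    have inner_eq : ∀ s : ℝ, (∫ t in Set.Ioc (0:ℝ) (n:ℝ), φ (t - s))
        = Φ ((n:ℝ) - s) - Φ (-s) := by
      intro s
      rw [← intervalIntegral.integral_of_le h0n]
      rw [intervalIntegral.integral_comp_sub_right (fun t => φ t) s]
      rw [← integral_Iic_sub_Iic (hφint.integrableOn) (hφint.integrableOn)]
      rw [zero_sub]
    calc (∫ s in Set.Ioc (0:ℝ) (n:ℝ), ∫ t in Set.Ioc (0:ℝ) (n:ℝ), φ (t - s))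
        = ∫ s in Set.Ioc (0:ℝ) (n:ℝ), (Φ ((n:ℝ) - s) - Φ (-s)) := by
          congr 1; ext s; exact inner_eq s
      _ = ∫ s in (0:ℝ)..(n:ℝ), (Φ ((n:ℝ) - s) - Φ (-s)) :=
          (intervalIntegral.integral_of_le h0n).symm
      _ = (∫ s in (0:ℝ)..(n:ℝ), Φ ((n:ℝ) - s)) - ∫ s in (0:ℝ)..(n:ℝ), Φ (-s) := by
          have hc1 : Continuous fun s : ℝ => Φ ((n:ℝ) - s) := by fun_prop
          have hc2 : Continuous fun s : ℝ => Φ (-s) := by fun_prop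
          rw [intervalIntegral.integral_sub (hc1.intervalIntegrable _ _)
            (hc2.intervalIntegrable _ _)]
      _ = (∫ u in (0:ℝ)..(n:ℝ), Φ u) - ∫ u in (0:ℝ)..(n:ℝ), Φ (-u) := by
          rw [intervalIntegral.integral_comp_sub_left (fun u => Φ u) (n:ℝ)]
          simp
  -- convergence
  have cesaro1 : Tendsto (fun n : ℕ => (n:ℝ)⁻¹ • ∫ u in (0:ℝ)..(n:ℝ), Φ u)
      atTop (𝓝 (∫ t, φ t)) := cesaro_integral_aux hΦc hΦtop
  have cesaro2 : Tendsto (fun n : ℕ => (n:ℝ)⁻¹ • ∫ u in (0:ℝ)..(n:ℝ), Φ (-u))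
      atTop (𝓝 0) := by
    refine cesaro_integral_aux (hΦc.comp continuous_neg) ?_
    exact hΦbot.comp tendsto_neg_atTop_atBot
  have hA : Tendsto (fun n : ℕ => (n:ℝ)⁻¹ • (inner ℂ (F n) (F n) : ℂ))
      atTop (𝓝 (∫ t, φ t)) := by
    have := cesaro1.sub cesaro2
    rw [sub_zero] at this
    refine this.congr fun n => ?_
    rw [hswap n, smul_sub]
  have him0 : ∀ n : ℕ, ((inner ℂ (F n) (F n) : ℂ)).im = 0 := fun n => by
    have := inner_self_im (𝕜 := ℂ) (F n)
    rwa [RCLike.im_to_complex] at this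
  have hre0 : ∀ n : ℕ, 0 ≤ ((inner ℂ (F n) (F n) : ℂ)).re := fun n => by
    have := inner_self_nonneg (𝕜 := ℂ) (x := F n)
    rwa [RCLike.re_to_complex] at this
  set L : ℂ := ∫ t, φ t with hL
  have him : L.im = 0 := by
    have h1 : Tendsto (fun n : ℕ => ((n:ℝ)⁻¹ • (inner ℂ (F n) (F n) : ℂ)).im)
        atTop (𝓝 L.im) := (Complex.continuous_im.tendsto L).comp hA
    have h2 : (fun n : ℕ => ((n:ℝ)⁻¹ • (inner ℂ (F n) (F n) : ℂ)).im) = fun _ => (0:ℝ) := by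
      ext n; rw [Complex.smul_im, him0 n]; simp
    rw [h2] at h1
    exact (tendsto_nhds_unique tendsto_const_nhds h1).symm
  have hre : 0 ≤ L.re := by
    have h1 : Tendsto (fun n : ℕ => ((n:ℝ)⁻¹ • (inner ℂ (F n) (F n) : ℂ)).re)
        atTop (𝓝 L.re) := (Complex.continuous_re.tendsto L).comp hA
    refine ge_of_tendsto' h1 fun n => ?_
    rw [Complex.smul_re, smul_eq_mul]
    exact mul_nonneg (by positivity) (hre0 n)
  refine ⟨L.re, hre, ?_⟩
  show L = (L.re : ℂ)
  exact Complex.ext rfl (by simp [him])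
end

section
/- Let A be a (not necessarily commutative) associative ℂ-algebra, let d, e : ℝ → A be finitely supported functions, let γ₀, γ₁ : ℝ → ℂ, let E ∈ ℝ and let n ≥ 1. With the convention ω_{2n+1} := 0, the following two sums over all tuples (ω₁, …, ω_{2n}) ∈ ℝ^{2n} (each having only finitely many nonzero terms) are equal: Σ_{ω₁,…,ω_{2n}} [∏_{p=1}^n γ₀(E+ω_{2p−1}) γ₁(E−ω_{2p})] · d(ω₂+ω₁) e(ω₂+ω₃) d(ω₄+ω₃) e(ω₄+ω₅) ⋯ d(ω_{2n}+ω_{2n−1}) e(ω_{2n}+ω_{2n+1}) = Σ_{ω₁,…,ω_{2n}} [∏_{p=1}^n γ₀(E + Σ_{q=2p−1}^{2n} (−1)^{q−1} ω_q) γ₁(E + Σ_{q=2p}^{2n} (−1)^{q−1} ω_q)] · d(ω₁) e(ω₂) d(ω₃) e(ω₄) ⋯ d(ω_{2n−1}) e(ω_{2n}), where the products of algebra elements are taken in the written (noncommutative) order and the scalar γ-factors multiply them. (This change-of-summation-variables identity is the core of the proof that Σ_ω R^{1,0}_{ω,0}(E) = Σ_n T^{10}_{2n+1}(E), identifying the coefficients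 of the low density limit stochastic equation with the perturbation series of the 1-particle T-operator.) -/
noncomputable section

/-- Extend a tuple `(ω₁, …, ω_{2n})` to a function on `ℕ` (1-based indexing), with the
convention that all other indices — in particular `ω_{2n+1}` — give `0`. -/
def extTuple (n : ℕ) (ω : Fin (2 * n) → ℝ) (q : ℕ) : ℝ :=
  if h : 1 ≤ q ∧ q ≤ 2 * n then ω ⟨q - 1, by omega⟩ else 0

/-- The summand
`[∏_{p=1}^n γ₀(E+ω_{2p−1}) γ₁(E−ω_{2p})] · d(ω₂+ω₁) e(ω₂+ω₃) d(ω₄+ω₃) ⋯ d(ω_{2n}+ω_{2n−1}) e(ω_{2n}+ω_{2n+1})`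
(with `ω_{2n+1} := 0`), the algebra factors multiplied in the written noncommutative
order. -/
def ldlTermLHS {A : Type*} [Ring A] [Algebra ℂ A] (d e : ℝ → A) (γ₀ γ₁ : ℝ → ℂ)
    (E : ℝ) (n : ℕ) (ω : Fin (2 * n) → ℝ) : A :=
  (∏ p ∈ Finset.range n,
      γ₀ (E + extTuple n ω (2 * p + 1)) * γ₁ (E - extTuple n ω (2 * p + 2))) •
    ((List.range n).map (fun p =>
      d (extTuple n ω (2 * p + 2) + extTuple n ω (2 * p + 1)) *
        e (extTuple n ω (2 * p + 2) + extTuple n ω (2 * p + 3)))).prod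

/-- The summand
`[∏_{p=1}^n γ₀(E + Σ_{q=2p−1}^{2n} (−1)^{q−1} ω_q) γ₁(E + Σ_{q=2p}^{2n} (−1)^{q−1} ω_q)] · d(ω₁) e(ω₂) ⋯ d(ω_{2n−1}) e(ω_{2n})`,
the algebra factors multiplied in the written noncommutative order. -/
def ldlTermRHS {A : Type*} [Ring A] [Algebra ℂ A] (d e : ℝ → A) (γ₀ γ₁ : ℝ → ℂ)
    (E : ℝ) (n : ℕ) (ω : Fin (2 * n) → ℝ) : A :=
  (∏ p ∈ Finset.range n,
      γ₀ (E + ∑ q ∈ Finset.Icc (2 * p + 1) (2 * n), (-1 : ℝ) ^ (q - 1) * extTuple n ω q) *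
        γ₁ (E + ∑ q ∈ Finset.Icc (2 * p + 2) (2 * n), (-1 : ℝ) ^ (q - 1) * extTuple n ω q)) •
    ((List.range n).map (fun p =>
      d (extTuple n ω (2 * p + 1)) * e (extTuple n ω (2 * p + 2)))).prod

lemma extTuple_pos (n : ℕ) (ω : Fin (2 * n) → ℝ) (q : ℕ) (h1 : 1 ≤ q) (h2 : q ≤ 2 * n) :
    extTuple n ω q = ω ⟨q - 1, by omega⟩ :=
  dif_pos ⟨h1, h2⟩

lemma extTuple_top (n : ℕ) (ω : Fin (2 * n) → ℝ) : extTuple n ω (2 * n + 1) = 0 :=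
  dif_neg (by omega)

lemma extTuple_fin (n : ℕ) (ω : Fin (2 * n) → ℝ) (i : Fin (2 * n)) :
    extTuple n ω (i.1 + 1) = ω i := by
  rw [extTuple_pos n ω _ (by omega) (by omega)]
  congr 1

def phiFun (n : ℕ) (ω : Fin (2 * n) → ℝ) : Fin (2 * n) → ℝ :=
  fun i => extTuple n ω (i.1 + 1) + extTuple n ω (i.1 + 2)

def psiFun (n : ℕ) (ν : Fin (2 * n) → ℝ) : Fin (2 * n) → ℝ :=
  fun i => ∑ r ∈ Finset.Icc (i.1 + 1) (2 * n), (-1 : ℝ) ^ (r - (i.1 + 1)) * extTuple n ν r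

lemma extTuple_phi (n : ℕ) (ω : Fin (2 * n) → ℝ) (q : ℕ) (h1 : 1 ≤ q) (h2 : q ≤ 2 * n) :
    extTuple n (phiFun n ω) q = extTuple n ω q + extTuple n ω (q + 1) := by
  rw [extTuple_pos n _ q h1 h2]
  show extTuple n ω (q - 1 + 1) + extTuple n ω (q - 1 + 2) = _
  rw [show q - 1 + 1 = q by omega, show q - 1 + 2 = q + 1 by omega]

lemma extTuple_psi (n : ℕ) (ν : Fin (2 * n) → ℝ) (q : ℕ) (h1 : 1 ≤ q) (h2 : q ≤ 2 * n + 1) :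
    extTuple n (psiFun n ν) q =
      ∑ r ∈ Finset.Icc q (2 * n), (-1 : ℝ) ^ (r - q) * extTuple n ν r := by
  rcases Nat.lt_or_ge (2 * n) q with h | h
  · rw [Finset.Icc_eq_empty (by omega), Finset.sum_empty]
    exact dif_neg (by omega)
  · rw [extTuple_pos n _ q h1 h]
    show ∑ r ∈ Finset.Icc (q - 1 + 1) (2 * n), (-1 : ℝ) ^ (r - (q - 1 + 1)) * extTuple n ν r = _
    rw [show q - 1 + 1 = q by omega]

lemma tele' (a : ℕ → ℝ) (m N : ℕ) (h : m ≤ N) :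
    ∑ r ∈ Finset.Icc m N, (-1 : ℝ) ^ (r - m) * (a r + a (r + 1)) =
      a m + (-1 : ℝ) ^ (N - m) * a (N + 1) := by
  induction N, h using Nat.le_induction with
  | base => simp
  | succ N hN ih =>
      rw [Finset.sum_Icc_succ_top (by omega), ih,
        show N + 1 - m = (N - m) + 1 by omega, pow_succ]
      ring

lemma tele1 (a : ℕ → ℝ) (m N : ℕ) (hm : 1 ≤ m) (h : m ≤ N) :
    ∑ q ∈ Finset.Icc m N, (-1 : ℝ) ^ (q - 1) * (a q + a (q + 1)) =
      (-1 : ℝ) ^ (m - 1) * a m + (-1 : ℝ) ^ (N - 1) * a (N + 1) := by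
  induction N, h using Nat.le_induction with
  | base => rw [Finset.Icc_self, Finset.sum_singleton]; ring
  | succ N hN ih =>
      rw [Finset.sum_Icc_succ_top (by omega), ih,
        show N + 1 - 1 = (N - 1) + 1 by omega, pow_succ]
      ring

lemma splitIcc (a : ℕ → ℝ) (q N : ℕ) (h : q ≤ N) :
    ∑ r ∈ Finset.Icc q N, (-1 : ℝ) ^ (r - q) * a r =
      a q - ∑ r ∈ Finset.Icc (q + 1) N, (-1 : ℝ) ^ (r - (q + 1)) * a r := by
  rw [Finset.Icc_eq_cons_Ioc h, Finset.sum_cons, Nat.sub_self, pow_zero, one_mul,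
    ← Finset.Icc_add_one_left_eq_Ioc]
  have : ∀ r ∈ Finset.Icc (q + 1) N, (-1 : ℝ) ^ (r - q) * a r
      = -((-1 : ℝ) ^ (r - (q + 1)) * a r) := by
    intro r hr
    simp only [Finset.mem_Icc] at hr
    rw [show r - q = (r - (q + 1)) + 1 by omega, pow_succ]
    ring
  rw [Finset.sum_congr rfl this, Finset.sum_neg_distrib]
  ring

def phiEquiv (n : ℕ) (hn : 1 ≤ n) : (Fin (2 * n) → ℝ) ≃ (Fin (2 * n) → ℝ) where
  toFun := phiFun n
  invFun := psiFun n
  left_inv := by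
    intro ω
    funext i
    show psiFun n (phiFun n ω) i = ω i
    unfold psiFun
    rw [Finset.sum_congr rfl (fun r hr => by
      simp only [Finset.mem_Icc] at hr
      rw [extTuple_phi n ω r (by omega) hr.2]),
      tele' (extTuple n ω) (i.1 + 1) (2 * n) (by omega), extTuple_top, extTuple_fin]
    ring
  right_inv := by
    intro ν
    funext i
    show phiFun n (psiFun n ν) i = ν i
    unfold phiFun
    rw [extTuple_psi n ν (i.1 + 1) (by omega) (by omega),
      extTuple_psi n ν (i.1 + 2) (by omega) (by omega),
      splitIcc (extTuple n ν) (i.1 + 1) (2 * n) (by omega), extTuple_fin]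
    ring

lemma key {A : Type*} [Ring A] [Algebra ℂ A] (d e : ℝ → A) (γ₀ γ₁ : ℝ → ℂ)
    (E : ℝ) (n : ℕ) (ω : Fin (2 * n) → ℝ) :
    ldlTermLHS d e γ₀ γ₁ E n ω = ldlTermRHS d e γ₀ γ₁ E n (phiFun n ω) := by
  unfold ldlTermLHS ldlTermRHS
  congr 1
  · apply Finset.prod_congr rfl
    intro p hp
    simp only [Finset.mem_range] at hp
    congr 1
    · congr 1
      rw [Finset.sum_congr rfl (fun q hq => by
          simp only [Finset.mem_Icc] at hq
          rw [extTuple_phi n ω q (by omega) hq.2]),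
        tele1 (extTuple n ω) (2 * p + 1) (2 * n) (by omega) (by omega), extTuple_top,
        show 2 * p + 1 - 1 = 2 * p by omega, pow_mul]
      norm_num
    · congr 1
      rw [Finset.sum_congr rfl (fun q hq => by
          simp only [Finset.mem_Icc] at hq
          rw [extTuple_phi n ω q (by omega) hq.2]),
        tele1 (extTuple n ω) (2 * p + 2) (2 * n) (by omega) (by omega), extTuple_top,
        show 2 * p + 2 - 1 = 2 * p + 1 by omega, pow_succ, pow_mul]
      norm_num
      ring
  · congr 1
    apply List.map_congr_left
    intro p hp
    simp only [List.mem_range] at hp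
    rw [extTuple_phi n ω (2 * p + 1) (by omega) (by omega),
      extTuple_phi n ω (2 * p + 2) (by omega) (by omega),
      add_comm (extTuple n ω (2 * p + 1)) (extTuple n ω (2 * p + 2))]

/-- The change-of-summation-variables identity at the core of the proof
that `Σ_ω R^{1,0}_{ω,0}(E) = Σ_n T^{10}_{2n+1}(E)`: for finitely supported `d, e : ℝ → A`
into an associative `ℂ`-algebra, any `γ₀, γ₁ : ℝ → ℂ`, `E ∈ ℝ` and `n ≥ 1`, the sum over
all tuples `(ω₁,…,ω_{2n}) ∈ ℝ^{2n}` (only finitely many nonzero terms) of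
`[∏ γ₀(E+ω_{2p−1}) γ₁(E−ω_{2p})] d(ω₂+ω₁) e(ω₂+ω₃) ⋯ d(ω_{2n}+ω_{2n−1}) e(ω_{2n}+ω_{2n+1})`
(with `ω_{2n+1} := 0`) equals the corresponding sum of
`[∏ γ₀(E+Σ_{q=2p−1}^{2n}(−1)^{q−1}ω_q) γ₁(E+Σ_{q=2p}^{2n}(−1)^{q−1}ω_q)] d(ω₁) e(ω₂) ⋯ d(ω_{2n−1}) e(ω_{2n})`. -/
theorem ldl_change_of_summation_variables
    {A : Type*} [Ring A] [Algebra ℂ A]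
    (d e : ℝ → A)
    (hd : (Function.support d).Finite) (he : (Function.support e).Finite)
    (γ₀ γ₁ : ℝ → ℂ) (E : ℝ) (n : ℕ) (hn : 1 ≤ n) :
    ∑ᶠ ω : Fin (2 * n) → ℝ, ldlTermLHS d e γ₀ γ₁ E n ω =
      ∑ᶠ ω : Fin (2 * n) → ℝ, ldlTermRHS d e γ₀ γ₁ E n ω := by
  rw [finsum_congr (key d e γ₀ γ₁ E n)]
  exact finsum_comp_equiv (phiEquiv n hn)

end
end
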